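/- arXiv:1702.08392 — 5 statements merged into one kernel-verified Lean document; each statement's English description precedes it below -/
import Mathlib

section
/- Let H be a fixed Boolean formula over n variables with #H satisfying assignments, let s ≥ 0, α ≥ 1, and let Q(n, sn) be a conjunction of ⌈sn⌉ independently uniform XOR-clauses. If #H ≥ 2^(⌈sn⌉+α), then the probability that H ∧ Q(n,sn) is satisfiable is at least 1 − 2^(−α). -/
open Finset

def xorSat {n : ℕ} (σ : Fin n → Bool) (C : Finset (Fin n) × Bool) : Prop :=
  (C.1.filter fun i => σ i).card % 2 = if C.2 then 0 else 1

instance {n : ℕ} (σ : Fin n → Bool) (C : Finset (Fin n) × Bool) :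
    Decidable (xorSat σ C) := by unfold xorSat; infer_instance

section Aux
variable {n : ℕ}

lemma count_one (σ : Fin n → Bool) :
    (univ.filter fun C : Finset (Fin n) × Bool => xorSat σ C).card = 2 ^ n := by
  rw [Finset.card_filter, Fintype.sum_prod_type]
  have h : ∀ S : Finset (Fin n),
      (∑ b : Bool, if xorSat σ (S, b) then 1 else 0) = 1 := by
    intro S
    have h := Nat.mod_two_eq_zero_or_one ((S.filter fun i => σ i).card)
    rw [Fintype.sum_bool]
    rcases h with h | h <;> simp [xorSat, h]
  simp only [h, Finset.sum_const, card_univ, Fintype.card_finset, Fintype.card_fin, smul_eq_mul,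
    mul_one]

def flipS (i : Fin n) (S : Finset (Fin n)) : Finset (Fin n) :=
  if i ∈ S then S.erase i else insert i S

lemma flipS_invol (i : Fin n) : Function.Involutive (flipS i) := by
  intro S
  unfold flipS
  by_cases h : i ∈ S
  · simp [h, Finset.insert_erase h]
  · simp [h, Finset.erase_insert h]

lemma flip_parity_true (σ : Fin n → Bool) (i : Fin n) (hi : σ i = true) (S : Finset (Fin n)) :
    ((flipS i S).filter fun j => σ j).card % 2 = (((S.filter fun j => σ j).card) + 1) % 2 := by
  unfold flipS
  by_cases h : i ∈ S
  · have hmem : i ∈ S.filter fun j => σ j = true := by simp [h, hi]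
    have hpos : 0 < (S.filter fun j => σ j = true).card := Finset.card_pos.2 ⟨i, hmem⟩
    simp only [h, if_true, Finset.filter_erase, Finset.card_erase_of_mem hmem]
    omega
  · have hmem : i ∉ S.filter fun j => σ j = true := by simp [h]
    simp [h, Finset.filter_insert, hi, Finset.card_insert_of_notMem hmem]

lemma flip_parity_false (σ : Fin n → Bool) (i : Fin n) (hi : σ i = false) (S : Finset (Fin n)) :
    ((flipS i S).filter fun j => σ j) = (S.filter fun j => σ j) := by
  unfold flipS
  have hmem : i ∉ S.filter fun j => σ j = true := by simp [hi]
  by_cases h : i ∈ S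
  · simp [h, Finset.filter_erase, Finset.erase_eq_of_notMem hmem]
  · simp [h, Finset.filter_insert, hi]

lemma count_two (σ τ : Fin n → Bool) (hne : σ ≠ τ) :
    2 * (univ.filter fun C : Finset (Fin n) × Bool =>
        xorSat σ C ∧ xorSat τ C).card = 2 ^ n := by
  obtain ⟨i, hi⟩ : ∃ i, σ i ≠ τ i := by
    by_contra hc
    push_neg at hc
    exact hne (funext hc)
  rw [Finset.card_filter, Fintype.sum_prod_type]
  set g : Finset (Fin n) → ℕ := fun S =>
    if (S.filter fun j => σ j).card % 2 = (S.filter fun j => τ j).card % 2 then 1 else 0 with hg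
  have hinner : ∀ S : Finset (Fin n),
      (∑ b : Bool, if xorSat σ (S, b) ∧ xorSat τ (S, b) then 1 else 0) = g S := by
    intro S
    rw [Fintype.sum_bool]
    have h1 := Nat.mod_two_eq_zero_or_one ((S.filter fun j => σ j).card)
    have h2 := Nat.mod_two_eq_zero_or_one ((S.filter fun j => τ j).card)
    rcases h1 with h1 | h1 <;> rcases h2 with h2 | h2 <;>
      simp [hg, xorSat, h1, h2]
  simp only [hinner]
  -- pairing via flipS i
  have hflip : ∀ S, g S + g (flipS i S) = 1 := by
    intro S
    have hσ := flip_parity_true σ i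
    have hτ := flip_parity_true τ i
    have h1 := Nat.mod_two_eq_zero_or_one ((S.filter fun j => σ j).card)
    have h2 := Nat.mod_two_eq_zero_or_one ((S.filter fun j => τ j).card)
    rcases hb : σ i with _ | _ <;> rcases hb' : τ i with _ | _
    · rw [hb, hb'] at hi; exact absurd rfl hi
    · have e1 := flip_parity_false σ i hb S
      have e2 := flip_parity_true τ i hb' S
      simp only [hg, e1, e2]
      rcases h1 with h1 | h1 <;> rcases h2 with h2 | h2 <;> simp [h1, h2] <;> omega
    · have e1 := flip_parity_true σ i hb S
      have e2 := flip_parity_false τ i hb' S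
      simp only [hg, e1, e2]
      rcases h1 with h1 | h1 <;> rcases h2 with h2 | h2 <;> simp [h1, h2] <;> omega
    · rw [hb, hb'] at hi; exact absurd rfl hi
  have hsum : ∑ S : Finset (Fin n), g (flipS i S) = ∑ S : Finset (Fin n), g S :=
    Fintype.sum_bijective (flipS i) (flipS_invol i).bijective _ _ (fun S => rfl)
  have : 2 * ∑ S : Finset (Fin n), g S
      = ∑ S : Finset (Fin n), (g S + g (flipS i S)) := by
    rw [Finset.sum_add_distrib, hsum]; ring
  rw [this]
  simp only [hflip, Finset.sum_const, card_univ, Fintype.card_finset, Fintype.card_fin,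
    smul_eq_mul, mul_one]

end Aux

lemma card_pi_filter {m : ℕ} {β : Type*} [DecidableEq β] [Fintype β]
    (p : β → Prop) [DecidablePred p] :
    (univ.filter fun Q : Fin m → β => ∀ j, p (Q j)).card = (univ.filter p).card ^ m := by
  rw [← Fintype.card_subtype, ← Fintype.card_subtype]
  rw [Fintype.card_congr (Equiv.subtypePiEquivPi (p := fun _ : Fin m => p))]
  simp [Fintype.card_pi]

set_option maxHeartbeats 1000000 in
theorem key (n m : ℕ) (α : ℝ) (hα : 1 ≤ α) (H : Finset (Fin n → Bool))
    (hH : (2 : ℝ) ^ ((m : ℝ) + α) ≤ (H.card : ℝ)) :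
    1 - (2 : ℝ) ^ (-α) ≤
      ((Finset.univ.filter fun Q : Fin m → Finset (Fin n) × Bool =>
          ∃ σ ∈ H, ∀ j, xorSat σ (Q j)).card : ℝ) /
        (Fintype.card (Fin m → Finset (Fin n) × Bool)) := by
  classical
  -- basic facts
  have hMpow : ((2:ℝ) ^ m : ℝ) = (2:ℝ) ^ (m:ℝ) := by
    rw [Real.rpow_natCast]
  have h2 : (2:ℝ) ^ ((m:ℝ) + α) = (2:ℝ) ^ m * (2:ℝ) ^ α := by
    rw [Real.rpow_add (by norm_num), hMpow]
  have hh2 : 2 ≤ H.card := by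
    have h1 : (2:ℝ) = (2:ℝ) ^ (1:ℝ) := (Real.rpow_one 2).symm
    have : (2:ℝ) ^ (1:ℝ) ≤ (2:ℝ) ^ ((m:ℝ) + α) := by
      apply Real.rpow_le_rpow_of_exponent_le (by norm_num)
      have : (0:ℝ) ≤ m := Nat.cast_nonneg m
      linarith
    have : (2:ℝ) ≤ (H.card : ℝ) := by rw [h1]; linarith
    exact_mod_cast this
  have hn : 1 ≤ n := by
    have hc := Finset.card_le_univ H
    simp only [Fintype.card_fun, Fintype.card_bool, Fintype.card_fin] at hc
    rcases n with _ | n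
    · simp at hc; omega
    · omega
  set f : (Fin m → Finset (Fin n) × Bool) → ℕ :=
    fun Q => (H.filter fun σ => ∀ j, xorSat σ (Q j)).card with hf
  -- the target set
  have hset : (Finset.univ.filter fun Q : Fin m → Finset (Fin n) × Bool =>
      ∃ σ ∈ H, ∀ j, xorSat σ (Q j))
      = Finset.univ.filter fun Q => 0 < f Q := by
    apply Finset.filter_congr
    intro Q _
    rw [hf]
    simp only [Finset.card_pos, Finset.filter_nonempty_iff]
  -- S1
  have hS1 : ∑ Q : Fin m → Finset (Fin n) × Bool, f Q = H.card * 2 ^ (n * m) := by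
    have : ∀ Q, f Q = ∑ σ ∈ H, if (∀ j, xorSat σ (Q j)) then 1 else 0 := by
      intro Q
      show (H.filter fun σ => ∀ j, xorSat σ (Q j)).card = _
      rw [Finset.card_filter]
    simp only [this]
    rw [Finset.sum_comm]
    have hone : ∀ σ : Fin n → Bool,
        (∑ Q : Fin m → Finset (Fin n) × Bool, if (∀ j, xorSat σ (Q j)) then 1 else 0)
          = 2 ^ (n * m) := by
      intro σ
      rw [← Finset.card_filter, card_pi_filter (fun C => xorSat σ C), count_one, ← pow_mul]
    simp only [hone, Finset.sum_const, smul_eq_mul]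
  -- S2
  have hS2 : ∑ Q : Fin m → Finset (Fin n) × Bool, (f Q) ^ 2
      ≤ H.card * 2 ^ (n * m) + H.card ^ 2 * 2 ^ ((n - 1) * m) := by
    have hsq : ∀ Q, (f Q) ^ 2 = ∑ σ ∈ H, ∑ τ ∈ H,
        if (∀ j, xorSat σ (Q j) ∧ xorSat τ (Q j)) then 1 else 0 := by
      intro Q
      show (H.filter fun σ => ∀ j, xorSat σ (Q j)).card ^ 2 = _
      rw [Finset.card_filter, sq, Finset.sum_mul_sum]
      congr 1; ext σ; congr 1; ext τ
      by_cases h1 : (∀ j, xorSat σ (Q j)) <;> by_cases h2 : (∀ j, xorSat τ (Q j)) <;>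
        simp [h1, h2, forall_and]
    simp only [hsq]
    rw [Finset.sum_comm]
    have hpair : ∀ σ ∈ H, (∑ Q : Fin m → Finset (Fin n) × Bool, ∑ τ ∈ H,
        if (∀ j, xorSat σ (Q j) ∧ xorSat τ (Q j)) then 1 else 0)
        ≤ 2 ^ (n * m) + H.card * 2 ^ ((n - 1) * m) := by
      intro σ hσ
      rw [Finset.sum_comm]
      have hterm : ∀ τ ∈ H, (∑ Q : Fin m → Finset (Fin n) × Bool,
          if (∀ j, xorSat σ (Q j) ∧ xorSat τ (Q j)) then 1 else 0)
          ≤ (if τ = σ then 2 ^ (n * m) else 0) + 2 ^ ((n - 1) * m) := by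
        intro τ _
        rw [← Finset.card_filter,
          card_pi_filter (fun C => xorSat σ C ∧ xorSat τ C)]
        by_cases hστ : τ = σ
        · subst hστ
          have : (univ.filter fun C : Finset (Fin n) × Bool =>
              xorSat τ C ∧ xorSat τ C) = univ.filter fun C => xorSat τ C := by
            simp
          rw [this, count_one, ← pow_mul]
          simp
        · have h2c := count_two σ τ (fun h => hστ h.symm)
          have hval : (univ.filter fun C : Finset (Fin n) × Bool =>
              xorSat σ C ∧ xorSat τ C).card = 2 ^ (n - 1) := by
            have : 2 ^ n = 2 * 2 ^ (n - 1) := by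
              rcases n with _ | k
              · omega
              · simp [pow_succ]; ring
            omega
          rw [hval, ← pow_mul]
          simp
      calc (∑ τ ∈ H, ∑ Q : Fin m → Finset (Fin n) × Bool,
            if (∀ j, xorSat σ (Q j) ∧ xorSat τ (Q j)) then 1 else 0)
          ≤ ∑ τ ∈ H, ((if τ = σ then 2 ^ (n * m) else 0) + 2 ^ ((n - 1) * m)) :=
            Finset.sum_le_sum hterm
        _ = 2 ^ (n * m) + H.card * 2 ^ ((n - 1) * m) := by
            rw [Finset.sum_add_distrib, Finset.sum_ite_eq' H σ (fun _ => 2 ^ (n * m)),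
              if_pos hσ, Finset.sum_const, smul_eq_mul]
    calc (∑ σ ∈ H, ∑ Q : Fin m → Finset (Fin n) × Bool, ∑ τ ∈ H,
          if (∀ j, xorSat σ (Q j) ∧ xorSat τ (Q j)) then 1 else 0)
        ≤ ∑ _σ ∈ H, (2 ^ (n * m) + H.card * 2 ^ ((n - 1) * m)) :=
          Finset.sum_le_sum hpair
      _ = H.card * 2 ^ (n * m) + H.card ^ 2 * 2 ^ ((n - 1) * m) := by
          rw [Finset.sum_const, smul_eq_mul]; ring
  -- the support set and Cauchy–Schwarz
  set F : Finset (Fin m → Finset (Fin n) × Bool) := univ.filter fun Q => 0 < f Q with hF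
  have hsum_eq : ∑ Q ∈ F, f Q = ∑ Q : Fin m → Finset (Fin n) × Bool, f Q := by
    rw [hF]
    exact Finset.sum_filter_of_ne (fun x _ h => Nat.pos_of_ne_zero h)
  have hCS : ((∑ Q ∈ F, f Q : ℕ) : ℝ) ^ 2
      ≤ (F.card : ℝ) * ((∑ Q ∈ F, (f Q) ^ 2 : ℕ) : ℝ) := by
    push_cast
    exact sq_sum_le_card_mul_sum_sq (s := F) (f := fun Q => (f Q : ℝ))
  have hsub : ∑ Q ∈ F, (f Q) ^ 2 ≤ ∑ Q : Fin m → Finset (Fin n) × Bool, (f Q) ^ 2 :=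
    Finset.sum_le_sum_of_subset (Finset.filter_subset _ _)
  -- real quantities
  set h : ℝ := (H.card : ℝ) with hhdef
  set T : ℝ := (2 : ℝ) ^ (n * m) with hTdef
  set M : ℝ := (2 : ℝ) ^ m with hMdef
  set T' : ℝ := (2 : ℝ) ^ ((n - 1) * m) with hT'def
  set a : ℝ := (F.card : ℝ) with hadef
  set S2r : ℝ := ((∑ Q : Fin m → Finset (Fin n) × Bool, (f Q) ^ 2 : ℕ) : ℝ) with hS2rdef
  have hTpos : (0:ℝ) < T := by positivity
  have hMpos : (0:ℝ) < M := by positivity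
  have hT'pos : (0:ℝ) < T' := by positivity
  have hhpos : (0:ℝ) < h := by
    rw [hhdef]; exact_mod_cast lt_of_lt_of_le (by norm_num) hh2
  have hanneg : (0:ℝ) ≤ a := by rw [hadef]; positivity
  have hr1 : (h * T) ^ 2 ≤ a * S2r := by
    have e1 : ((∑ Q ∈ F, f Q : ℕ) : ℝ) = h * T := by
      rw [hsum_eq, hS1]; push_cast; rw [← hhdef, ← hTdef]
    calc (h * T) ^ 2 = ((∑ Q ∈ F, f Q : ℕ) : ℝ) ^ 2 := by rw [e1]
      _ ≤ (F.card : ℝ) * ((∑ Q ∈ F, (f Q) ^ 2 : ℕ) : ℝ) := hCS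
      _ ≤ a * S2r := by
          apply mul_le_mul_of_nonneg_left _ hanneg
          rw [hS2rdef]
          exact_mod_cast hsub
  have hr2 : S2r ≤ h * T + h ^ 2 * T' := by
    rw [hS2rdef, hhdef, hTdef, hT'def]
    exact_mod_cast hS2
  have hTT' : T' * M = T := by
    rw [hT'def, hMdef, hTdef, ← pow_add]
    congr 1
    obtain ⟨k, rfl⟩ : ∃ k, n = k + 1 := ⟨n - 1, by omega⟩
    simp [Nat.add_mul]
  set c : ℝ := (2 : ℝ) ^ (-α) with hcdef
  have hcmul : c * (2 : ℝ) ^ α = 1 := by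
    rw [hcdef, ← Real.rpow_add (by norm_num : (0:ℝ) < 2)]
    simp
  have hcpos : (0:ℝ) < c := Real.rpow_pos_of_pos (by norm_num) _
  have hc1 : c ≤ 1 :=
    Real.rpow_le_one_of_one_le_of_nonpos (by norm_num) (by linarith)
  have h3 : M * (2 : ℝ) ^ α ≤ h := by
    rw [hhdef, hMpow]
    calc (2:ℝ) ^ (m:ℝ) * (2:ℝ) ^ α = (2:ℝ) ^ ((m:ℝ) + α) := by
          rw [Real.rpow_add (by norm_num)]
      _ ≤ (H.card : ℝ) := hH
  have hMch : M ≤ c * h := by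
    have e := mul_le_mul_of_nonneg_right h3 hcpos.le
    calc M = M * ((2:ℝ) ^ α * c) := by rw [mul_comm ((2:ℝ) ^ α) c, hcmul, mul_one]
      _ = M * (2:ℝ) ^ α * c := by ring
      _ ≤ h * c := e
      _ = c * h := mul_comm _ _
  -- combine
  have hr2' : S2r * M ≤ h * T * M + h ^ 2 * T := by
    have e : (h * T + h ^ 2 * T') * M = h * T * M + h ^ 2 * (T' * M) := by ring
    calc S2r * M ≤ (h * T + h ^ 2 * T') * M :=
          mul_le_mul_of_nonneg_right hr2 hMpos.le
      _ = h * T * M + h ^ 2 * (T' * M) := e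
      _ = h * T * M + h ^ 2 * T := by rw [hTT']
  have e1 : (1 - c) * M ≤ c * h :=
    le_trans (by nlinarith) hMch
  have e2 : (1 - c) * M * (h * (T ^ 2 * M)) ≤ c * h * (h * (T ^ 2 * M)) :=
    mul_le_mul_of_nonneg_right e1 (by positivity)
  have hclaim : (1 - c) * (T * M) * (h * T * M + h ^ 2 * T) ≤ (h * T) ^ 2 * M := by
    linarith [e2]
  have hchain : (h * T) ^ 2 * M ≤ a * (h * T * M + h ^ 2 * T) :=
    calc (h * T) ^ 2 * M ≤ (a * S2r) * M := mul_le_mul_of_nonneg_right hr1 hMpos.le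
      _ = a * (S2r * M) := by ring
      _ ≤ a * (h * T * M + h ^ 2 * T) := mul_le_mul_of_nonneg_left hr2' hanneg
  have hfinal : (1 - c) * (T * M) ≤ a := by
    have hPpos : (0:ℝ) < h * T * M + h ^ 2 * T := by positivity
    exact le_of_mul_le_mul_right (le_trans hclaim hchain) hPpos
  -- now rewrite the goal
  rw [hset]
  have hD : (Fintype.card (Fin m → Finset (Fin n) × Bool) : ℝ) = T * M := by
    rw [Fintype.card_fun, Fintype.card_prod, Fintype.card_finset, Fintype.card_fin,
      Fintype.card_bool, Fintype.card_fin, hTdef, hMdef]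
    push_cast
    rw [mul_pow, ← pow_mul]
  rw [hD, le_div_iff₀ (by positivity)]
  exact hfinal

/-- If a fixed formula `H` over `n` variables (identified with its finite set of
satisfying assignments) has at least `2^(⌈sn⌉+α)` satisfying assignments, then
`H ∧ Q(n,sn)` (with `⌈sn⌉` independently uniform XOR-clauses) is satisfiable
with probability at least `1 - 2^(-α)`. -/
theorem prob_sat_with_xor_lower (n : ℕ) (s : ℝ) (hs : 0 ≤ s) (α : ℝ) (hα : 1 ≤ α)
    (H : Finset (Fin n → Bool))
    (hH : (2 : ℝ) ^ ((⌈s * (n : ℝ)⌉₊ : ℝ) + α) ≤ (H.card : ℝ)) :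
    1 - (2 : ℝ) ^ (-α) ≤
      ((Finset.univ.filter fun Q : Fin ⌈s * (n : ℝ)⌉₊ → Finset (Fin n) × Bool =>
          ∃ σ ∈ H, ∀ j, xorSat σ (Q j)).card : ℝ) /
        (Fintype.card (Fin ⌈s * (n : ℝ)⌉₊ → Finset (Fin n) × Bool)) :=
  key n ⌈s * (n : ℝ)⌉₊ α hα H hH
end

section
/- Let H be a fixed Boolean formula over n variables, let s ≥ 0, α ≥ 1, and let Q(n,sn) be a conjunction of ⌈sn⌉ independently uniform XOR-clauses. If #H ≤ 2^(⌈sn⌉−α), then the probability that H ∧ Q(n,sn) is unsatisfiable is at least 1 − 2^(−α). -/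
open Finset

lemma cardXor {n : ℕ} (σ : Fin n → Bool) :
    ((univ : Finset (Finset (Fin n) × Bool)).filter (fun C => xorSat σ C)).card = 2 ^ n := by
  have h : (univ : Finset (Finset (Fin n) × Bool)).filter (fun C => xorSat σ C)
      = (univ : Finset (Finset (Fin n))).image
          (fun A => (A, decide ((A.filter fun i => σ i).card % 2 = 0))) := by
    ext ⟨A, b⟩
    simp only [mem_filter, mem_univ, true_and, mem_image, Prod.mk.injEq]
    constructor
    · intro h
      refine ⟨A, rfl, ?_⟩
      unfold xorSat at h
      rcases Nat.mod_two_eq_zero_or_one ((A.filter fun i => σ i).card) with h0 | h1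
      · cases b <;> simp_all
      · cases b <;> simp_all
    · rintro ⟨A', rfl, rfl⟩
      unfold xorSat
      rcases Nat.mod_two_eq_zero_or_one ((A'.filter fun i => σ i).card) with h0 | h1 <;>
        simp_all
  rw [h, Finset.card_image_of_injective _ (fun a b hab => congrArg Prod.fst hab)]
  simp

lemma cardPi {n m : ℕ} (σ : Fin n → Bool) :
    ((univ : Finset (Fin m → Finset (Fin n) × Bool)).filter
      (fun Q => ∀ j, xorSat σ (Q j))).card = (2 ^ n) ^ m := by
  have h : (univ : Finset (Fin m → Finset (Fin n) × Bool)).filter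
      (fun Q => ∀ j, xorSat σ (Q j))
      = Fintype.piFinset (fun _ : Fin m => univ.filter (fun C => xorSat σ C)) := by
    ext Q
    simp [Fintype.mem_piFinset]
  rw [h, Fintype.card_piFinset]
  simp [cardXor]

lemma satCount {n m : ℕ} (H : Finset (Fin n → Bool)) :
    ((univ : Finset (Fin m → Finset (Fin n) × Bool)).filter
      (fun Q => ∃ σ ∈ H, ∀ j, xorSat σ (Q j))).card
      ≤ ∑ σ ∈ H, ((univ : Finset (Fin m → Finset (Fin n) × Bool)).filter
          (fun Q => ∀ j, xorSat σ (Q j))).card := by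
  calc ((univ : Finset (Fin m → Finset (Fin n) × Bool)).filter
      (fun Q => ∃ σ ∈ H, ∀ j, xorSat σ (Q j))).card
      ≤ ∑ Q ∈ (univ : Finset (Fin m → Finset (Fin n) × Bool)),
          ∑ σ ∈ H, (if ∀ j, xorSat σ (Q j) then 1 else 0) := by
        rw [Finset.card_filter]
        apply Finset.sum_le_sum
        intro Q _
        split_ifs with h
        · obtain ⟨σ, hσ, hQ⟩ := h
          have := Finset.single_le_sum (f := fun σ' => if ∀ j, xorSat σ' (Q j) then 1 else 0)
            (fun i _ => by positivity) hσ
          simpa [if_pos hQ] using this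
        · positivity
    _ = ∑ σ ∈ H, ((univ : Finset (Fin m → Finset (Fin n) × Bool)).filter
          (fun Q => ∀ j, xorSat σ (Q j))).card := by
        rw [Finset.sum_comm]
        refine Finset.sum_congr rfl fun σ _ => ?_
        rw [Finset.card_filter]

/-- If a fixed formula `H` over `n` variables (identified with its finite set of
satisfying assignments) has at most `2^(⌈sn⌉-α)` satisfying assignments, then
`H ∧ Q(n,sn)` (with `⌈sn⌉` independently uniform XOR-clauses) is unsatisfiable
with probability at least `1 - 2^(-α)`. -/
theorem prob_unsat_with_xor_upper (n : ℕ) (s : ℝ) (hs : 0 ≤ s) (α : ℝ) (hα : 1 ≤ α)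
    (H : Finset (Fin n → Bool))
    (hH : (H.card : ℝ) ≤ (2 : ℝ) ^ ((⌈s * (n : ℝ)⌉₊ : ℝ) - α)) :
    1 - (2 : ℝ) ^ (-α) ≤
      ((Finset.univ.filter fun Q : Fin ⌈s * (n : ℝ)⌉₊ → Finset (Fin n) × Bool =>
          ¬ ∃ σ ∈ H, ∀ j, xorSat σ (Q j)).card : ℝ) /
        (Fintype.card (Fin ⌈s * (n : ℝ)⌉₊ → Finset (Fin n) × Bool)) := by
  set m := ⌈s * (n : ℝ)⌉₊ with hm
  have hT : Fintype.card (Fin m → Finset (Fin n) × Bool) = (2 ^ (n + 1)) ^ m := by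
    simp [Fintype.card_fun, pow_succ, mul_comm]
  set S := (Finset.univ.filter fun Q : Fin m → Finset (Fin n) × Bool =>
      ∃ σ ∈ H, ∀ j, xorSat σ (Q j)) with hS
  have hcompl : (Finset.univ.filter fun Q : Fin m → Finset (Fin n) × Bool =>
      ¬ ∃ σ ∈ H, ∀ j, xorSat σ (Q j)).card
      = Fintype.card (Fin m → Finset (Fin n) × Bool) - S.card := by
    rw [hS, Finset.filter_not, Finset.card_sdiff_of_subset (Finset.filter_subset _ _)]
    simp
  have hSle : S.card ≤ Fintype.card (Fin m → Finset (Fin n) × Bool) :=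
    le_trans (Finset.card_le_card (Finset.filter_subset _ _)) (by simp)
  have hTpos : (0 : ℝ) < (Fintype.card (Fin m → Finset (Fin n) × Bool) : ℝ) := by
    rw [hT]; positivity
  -- main bound on S in ℝ
  have hSreal : (S.card : ℝ) ≤ (2 : ℝ) ^ (-α) * (Fintype.card (Fin m → Finset (Fin n) × Bool)) := by
    have h1 : (S.card : ℝ) ≤ (H.card : ℝ) * ((2 : ℝ) ^ n) ^ m := by
      have h0 : S.card ≤ H.card * (2 ^ n) ^ m := by
        calc S.card ≤ ∑ σ ∈ H, ((univ : Finset (Fin m → Finset (Fin n) × Bool)).filter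
            (fun Q => ∀ j, xorSat σ (Q j))).card := satCount H
          _ = H.card * (2 ^ n) ^ m := by
              refine (Finset.sum_congr rfl fun σ _ => cardPi σ).trans ?_
              simp [mul_comm]
      calc (S.card : ℝ) ≤ ((H.card * (2 ^ n) ^ m : ℕ) : ℝ) := by exact_mod_cast h0
        _ = (H.card : ℝ) * ((2 : ℝ) ^ n) ^ m := by push_cast; ring
    calc (S.card : ℝ) ≤ (H.card : ℝ) * ((2 : ℝ) ^ n) ^ m := h1
      _ ≤ (2 : ℝ) ^ ((m : ℝ) - α) * ((2 : ℝ) ^ n) ^ m := by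
          apply mul_le_mul_of_nonneg_right hH (by positivity)
      _ = (2 : ℝ) ^ (-α) * (Fintype.card (Fin m → Finset (Fin n) × Bool)) := by
          rw [hT, Real.rpow_sub (by norm_num), Real.rpow_neg (by norm_num : (0:ℝ) ≤ 2),
            Real.rpow_natCast]
          push_cast
          rw [pow_succ]
          ring
  -- conclude
  rw [hcompl, Nat.cast_sub hSle, sub_div, div_self hTpos.ne']
  have h2 : (S.card : ℝ) / (Fintype.card (Fin m → Finset (Fin n) × Bool)) ≤ (2:ℝ) ^ (-α) :=
    (div_le_iff₀ hTpos).2 (by linarith [hSreal])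
  linarith
end

section
/- Let k ≥ 2, s ≥ 0, r ≥ 0, and let (B_i) be a convergent sequence of positive reals such that for each i, with high probability #F_k(n,rn) ≥ B_i^n. If 2^s < lim_{i→∞} B_i, then with high probability the random k-CNF-XOR formula ψ_k(n, rn, sn) = F_k(n,rn) ∧ Q(n,sn) is satisfiable. -/
open Finset Filter

def KClause (n k : ℕ) : Type :=
  Σ A : {A : Finset (Fin n) // A.card = k}, ({x // x ∈ A.1} → Bool)

instance (n k : ℕ) : Fintype (KClause n k) := by unfold KClause; infer_instance

def kSat {n k : ℕ} (σ : Fin n → Bool) (C : KClause n k) : Prop :=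
  ∃ i : {x // x ∈ C.1.1}, σ i.1 = C.2 i

instance {n k : ℕ} (σ : Fin n → Bool) (C : KClause n k) : Decidable (kSat σ C) := by
  unfold kSat; infer_instance

def numSat {n k m : ℕ} (F : Fin m → KClause n k) : ℕ :=
  (Finset.univ.filter fun σ : Fin n → Bool => ∀ j, kSat σ (F j)).card

/-- Satisfiability of the `k`-CNF-XOR formula `F ∧ Q`. -/
def psiSat {n k m₁ m₂ : ℕ} (FQ : (Fin m₁ → KClause n k) × (Fin m₂ → Finset (Fin n) × Bool)) :
    Prop :=
  ∃ σ : Fin n → Bool, (∀ j, kSat σ (FQ.1 j)) ∧ ∀ j, xorSat σ (FQ.2 j)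

instance {n k m₁ m₂ : ℕ}
    (FQ : (Fin m₁ → KClause n k) × (Fin m₂ → Finset (Fin n) × Bool)) :
    Decidable (psiSat FQ) := by
  unfold psiSat; infer_instance

lemma filter_xor_card (n : ℕ) (σ : Fin n → Bool) :
    ((univ : Finset (Finset (Fin n) × Bool)).filter (fun C => xorSat σ C)).card = 2^n := by
  rw [Finset.card_filter, ← Finset.univ_product_univ, Finset.sum_product]
  have h : ∀ A : Finset (Fin n),
      (∑ b : Bool, if xorSat σ (A, b) then 1 else 0) = 1 := by
    intro A
    rcases Nat.mod_two_eq_zero_or_one ((A.filter fun i => σ i).card) with h | h <;>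
      simp [xorSat, h, Fintype.sum_bool] <;> rfl
  simp only [h, Finset.sum_const, smul_eq_mul, mul_one, Finset.card_univ,
    Fintype.card_finset, Fintype.card_fin]

lemma card_even_inter (n : ℕ) (D : Finset (Fin n)) (hD : D.Nonempty) :
    ((univ : Finset (Finset (Fin n))).filter (fun A => (A ∩ D).card % 2 = 0)).card = 2^(n-1) := by
  obtain ⟨d, hd⟩ := hD
  have hn : 1 ≤ n := by
    have := d.2; omega
  set f : Finset (Fin n) → Finset (Fin n) := fun A => if d ∈ A then A.erase d else insert d A with hf
  have hpar : ∀ A : Finset (Fin n), ((f A) ∩ D).card % 2 = ((A ∩ D).card + 1) % 2 := by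
    intro A
    by_cases h : d ∈ A
    · have hmem : d ∈ A ∩ D := Finset.mem_inter.mpr ⟨h, hd⟩
      have hc : 1 ≤ (A ∩ D).card := Finset.card_pos.mpr ⟨d, hmem⟩
      have : (f A) ∩ D = (A ∩ D).erase d := by
        simp only [hf, if_pos h]; exact Finset.erase_inter d A D
      rw [this, Finset.card_erase_of_mem hmem]
      omega
    · have : (f A) ∩ D = insert d (A ∩ D) := by
        simp only [hf, if_neg h]; exact Finset.insert_inter_of_mem hd
      rw [this, Finset.card_insert_of_notMem (fun hc => h (Finset.mem_inter.mp hc).1)]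
  have hff : ∀ A : Finset (Fin n), f (f A) = A := by
    intro A
    by_cases h : d ∈ A
    · simp [hf, h, Finset.insert_erase h]
    · simp [hf, h, Finset.erase_insert h]
  have hcards : ((univ : Finset (Finset (Fin n))).filter (fun A => (A ∩ D).card % 2 = 0)).card =
      ((univ : Finset (Finset (Fin n))).filter (fun A => ¬ ((A ∩ D).card % 2 = 0))).card := by
    apply Finset.card_nbij' f f
    · intro A hA
      simp only [Finset.mem_coe, Finset.mem_filter, Finset.mem_univ, true_and] at hA ⊢
      rw [hpar A]; omega
    · intro A hA
      simp only [Finset.mem_coe, Finset.mem_filter, Finset.mem_univ, true_and] at hA ⊢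
      rw [hpar A]; omega
    · intro A _; exact hff A
    · intro A _; exact hff A
  have htot := Finset.card_filter_add_card_filter_not
    (s := (univ : Finset (Finset (Fin n)))) (p := fun A => (A ∩ D).card % 2 = 0)
  rw [Finset.card_univ, Fintype.card_finset, Fintype.card_fin] at htot
  have h2 : 2 * ((univ : Finset (Finset (Fin n))).filter (fun A => (A ∩ D).card % 2 = 0)).card = 2^n := by
    omega
  have : 2^n = 2 * 2^(n-1) := by
    rw [← pow_succ']; congr 1; omega
  omega

lemma parity_eq_iff (n : ℕ) (σ τ : Fin n → Bool) (A : Finset (Fin n)) :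
    ((A.filter fun i => σ i).card % 2 = (A.filter fun i => τ i).card % 2) ↔
      ((A ∩ (univ.filter fun i => σ i ≠ τ i)).card % 2 = 0) := by
  have hAD : A ∩ (univ.filter fun i => σ i ≠ τ i) = A.filter (fun i => σ i ≠ τ i) := by
    ext i; simp [Finset.mem_inter, Finset.mem_filter, and_comm]
  rw [hAD]
  rw [Finset.card_filter, Finset.card_filter, Finset.card_filter]
  have key : ((∑ i ∈ A, if σ i = true then 1 else 0) + (∑ i ∈ A, if τ i = true then 1 else 0)) % 2
      = (∑ i ∈ A, if σ i ≠ τ i then 1 else 0) % 2 := by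
    rw [← Finset.sum_add_distrib, Finset.sum_nat_mod, Finset.sum_nat_mod A 2 (fun i => if σ i ≠ τ i then 1 else 0)]
    congr 2
    funext i
    cases hσ : σ i <;> cases hτ : τ i <;> simp
  omega

lemma filter_xor2_card (n : ℕ) (σ τ : Fin n → Bool) (hστ : σ ≠ τ) :
    ((univ : Finset (Finset (Fin n) × Bool)).filter
      (fun C => xorSat σ C ∧ xorSat τ C)).card = 2^(n-1) := by
  rw [Finset.card_filter, ← Finset.univ_product_univ, Finset.sum_product]
  have h : ∀ A : Finset (Fin n),
      (∑ b : Bool, if xorSat σ (A, b) ∧ xorSat τ (A, b) then 1 else 0) =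
        if (A.filter fun i => σ i).card % 2 = (A.filter fun i => τ i).card % 2 then 1 else 0 := by
    intro A
    rcases Nat.mod_two_eq_zero_or_one ((A.filter fun i => σ i).card) with h1 | h1 <;>
      rcases Nat.mod_two_eq_zero_or_one ((A.filter fun i => τ i).card) with h2 | h2 <;>
        simp [xorSat, h1, h2, Fintype.sum_bool] <;> rfl
  rw [Finset.sum_congr rfl (fun A _ => h A), ← Finset.card_filter]
  have : (univ : Finset (Finset (Fin n))).filter
      (fun A => (A.filter fun i => σ i).card % 2 = (A.filter fun i => τ i).card % 2) =
      (univ : Finset (Finset (Fin n))).filter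
      (fun A => (A ∩ (univ.filter fun i => σ i ≠ τ i)).card % 2 = 0) := by
    apply Finset.filter_congr
    intro A _
    exact parity_eq_iff n σ τ A
  rw [this]
  apply card_even_inter
  obtain ⟨i, hi⟩ := Function.ne_iff.mp hστ
  exact ⟨i, by simpa using hi⟩

lemma card_forall_pi {α : Type*} [Fintype α] [DecidableEq α] (m : ℕ) (p : α → Prop)
    [DecidablePred p] :
    ((univ : Finset (Fin m → α)).filter (fun Q => ∀ j, p (Q j))).card =
      ((univ : Finset α).filter p).card ^ m := by
  have : (univ : Finset (Fin m → α)).filter (fun Q => ∀ j, p (Q j)) =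
      Fintype.piFinset (fun _ : Fin m => (univ : Finset α).filter p) := by
    ext Q; simp [Fintype.mem_piFinset]
  rw [this, Fintype.card_piFinset]
  simp

lemma arith_key (a w T Npc N0c : ℝ) (ha : 0 ≤ a) (hw : 0 < w) (hT : 0 < T) (hNpc : 0 ≤ Npc)
    (hsum : N0c + Npc = w*T*T) (hkey : (a*(w*T))^2 ≤ Npc*(a*(w*T) + a^2*w)) :
    N0c * a ≤ w*T*T*T := by
  have hN0c : N0c = w*T*T - Npc := by linarith
  subst hN0c
  have h2 : a^2*w*T^2 ≤ Npc * a * (T+a) := by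
    have h3 : w * (a^2*w*T^2) ≤ w * (Npc * a * (T+a)) := by nlinarith [hkey]
    exact le_of_mul_le_mul_left h3 hw
  have hP : (0:ℝ) < T + a := by linarith
  nlinarith [h2, hP, mul_pos (mul_pos hw hT) (mul_pos (mul_pos hT hT) hT)]

lemma key_second_moment (n m : ℕ) (hn : 1 ≤ n) (S : Finset (Fin n → Bool)) :
    (((univ : Finset (Fin m → Finset (Fin n) × Bool)).filter
        (fun Q => ¬ ∃ σ ∈ S, ∀ j, xorSat σ (Q j))).card : ℝ) * S.card ≤
      (Fintype.card (Fin m → Finset (Fin n) × Bool) : ℝ) * 2^m := by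
  classical
  set Ω := (univ : Finset (Fin m → Finset (Fin n) × Bool)) with hΩ
  set Zn : (Fin m → Finset (Fin n) × Bool) → ℕ :=
    fun Q => (S.filter fun σ => ∀ j, xorSat σ (Q j)).card with hZn
  have hZcast : ∀ Q, (Zn Q : ℝ) = ∑ σ ∈ S, if (∀ j, xorSat σ (Q j)) then (1:ℝ) else 0 := by
    intro Q
    have h1 : Zn Q = ∑ σ ∈ S, if (∀ j, xorSat σ (Q j)) then 1 else 0 := Finset.card_filter _ _
    rw [h1]
    push_cast
    simp [apply_ite (fun x : ℕ => (x : ℝ))]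
  -- first moment
  have sum1 : ∑ Q ∈ Ω, (Zn Q : ℝ) = (S.card : ℝ) * ((2:ℝ)^n)^m := by
    simp_rw [hZcast]
    rw [Finset.sum_comm]
    have hone : ∀ σ ∈ S, (∑ Q ∈ Ω, if (∀ j, xorSat σ (Q j)) then (1:ℝ) else 0)
        = ((2:ℝ)^n)^m := by
      intro σ _
      rw [Finset.sum_boole]
      rw [show (Ω.filter fun Q => ∀ j, xorSat σ (Q j)) =
        ((univ : Finset (Fin m → Finset (Fin n) × Bool)).filter
          fun Q => ∀ j, (fun C => xorSat σ C) (Q j)) from rfl]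
      rw [card_forall_pi m (fun C => xorSat σ C), filter_xor_card]
      push_cast
      ring
    rw [Finset.sum_congr rfl hone, Finset.sum_const, nsmul_eq_mul]
  -- second moment
  have sum2 : ∑ Q ∈ Ω, (Zn Q : ℝ)^2 ≤
      (S.card : ℝ) * ((2:ℝ)^n)^m + (S.card : ℝ)^2 * ((2:ℝ)^(n-1))^m := by
    have hsq : ∀ Q, (Zn Q : ℝ)^2 = ∑ σ ∈ S, ∑ τ ∈ S,
        if (∀ j, xorSat σ (Q j) ∧ xorSat τ (Q j)) then (1:ℝ) else 0 := by
      intro Q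
      rw [sq, hZcast, Finset.sum_mul_sum]
      apply Finset.sum_congr rfl; intro σ _
      apply Finset.sum_congr rfl; intro τ _
      by_cases h1 : (∀ j, xorSat σ (Q j)) <;> by_cases h2 : (∀ j, xorSat τ (Q j)) <;>
        simp [h1, h2, forall_and]
    simp_rw [hsq]
    rw [Finset.sum_comm]
    have hswap : ∀ σ ∈ S, (∑ Q ∈ Ω, ∑ τ ∈ S,
        if (∀ j, xorSat σ (Q j) ∧ xorSat τ (Q j)) then (1:ℝ) else 0)
        = ∑ τ ∈ S, ∑ Q ∈ Ω, if (∀ j, xorSat σ (Q j) ∧ xorSat τ (Q j)) then (1:ℝ) else 0 :=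
      fun σ _ => Finset.sum_comm
    rw [Finset.sum_congr rfl hswap]
    have hval : ∀ σ ∈ S, ∀ τ ∈ S,
        (∑ Q ∈ Ω, if (∀ j, xorSat σ (Q j) ∧ xorSat τ (Q j)) then (1:ℝ) else 0) ≤
          (if σ = τ then ((2:ℝ)^n)^m else 0) + ((2:ℝ)^(n-1))^m := by
      intro σ _ τ _
      rw [Finset.sum_boole]
      rw [show (Ω.filter fun Q => ∀ j, xorSat σ (Q j) ∧ xorSat τ (Q j)) =
        ((univ : Finset (Fin m → Finset (Fin n) × Bool)).filter
          fun Q => ∀ j, (fun C => xorSat σ C ∧ xorSat τ C) (Q j)) from rfl]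
      rw [card_forall_pi m (fun C => xorSat σ C ∧ xorSat τ C)]
      by_cases h : σ = τ
      · subst h
        rw [show ((univ : Finset (Finset (Fin n) × Bool)).filter fun C => xorSat σ C ∧ xorSat σ C)
            = ((univ : Finset (Finset (Fin n) × Bool)).filter fun C => xorSat σ C) by
          apply Finset.filter_congr; intro C _; simp]
        rw [filter_xor_card]
        simp only [if_pos rfl]
        push_cast
        nlinarith [pow_nonneg (pow_nonneg (by norm_num : (0:ℝ) ≤ 2) (n-1)) m]
      · rw [filter_xor2_card n σ τ h]
        simp only [if_neg h]
        push_cast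
        ring_nf
        exact le_rfl
    calc ∑ σ ∈ S, ∑ τ ∈ S,
          (∑ Q ∈ Ω, if (∀ j, xorSat σ (Q j) ∧ xorSat τ (Q j)) then (1:ℝ) else 0)
        ≤ ∑ σ ∈ S, ∑ τ ∈ S, ((if σ = τ then ((2:ℝ)^n)^m else 0) + ((2:ℝ)^(n-1))^m) := by
          apply Finset.sum_le_sum; intro σ hσ
          exact Finset.sum_le_sum (hval σ hσ)
      _ = (S.card : ℝ) * ((2:ℝ)^n)^m + (S.card : ℝ)^2 * ((2:ℝ)^(n-1))^m := by
          have hinner : ∀ σ ∈ S, (∑ τ ∈ S,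
              ((if σ = τ then ((2:ℝ)^n)^m else 0) + ((2:ℝ)^(n-1))^m))
              = ((2:ℝ)^n)^m + (S.card : ℝ) * ((2:ℝ)^(n-1))^m := by
            intro σ hσ
            rw [Finset.sum_add_distrib, Finset.sum_const, nsmul_eq_mul,
              Finset.sum_ite_eq S σ (fun _ => ((2:ℝ)^n)^m), if_pos hσ]
          rw [Finset.sum_congr rfl hinner, Finset.sum_const, nsmul_eq_mul]
          ring
  -- Cauchy–Schwarz on the support
  set Np := (Ω.filter fun Q => Zn Q ≠ 0) with hNpdef
  have hzero : ∑ Q ∈ Ω.filter (fun Q => ¬ Zn Q ≠ 0), (Zn Q : ℝ) = 0 := by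
    apply Finset.sum_eq_zero; intro Q hQ
    simp only [Finset.mem_filter, not_not] at hQ
    rw [hQ.2]; norm_num
  have hsplit := Finset.sum_filter_add_sum_filter_not Ω (fun Q => Zn Q ≠ 0)
    (fun Q => (Zn Q : ℝ))
  have hsupp : ∑ Q ∈ Np, (Zn Q : ℝ) = ∑ Q ∈ Ω, (Zn Q : ℝ) := by
    rw [← hsplit, hzero, add_zero]
  have hCS : (∑ Q ∈ Ω, (Zn Q : ℝ))^2 ≤ (Np.card : ℝ) * ∑ Q ∈ Ω, (Zn Q : ℝ)^2 := by
    calc (∑ Q ∈ Ω, (Zn Q : ℝ))^2 = (∑ Q ∈ Np, (Zn Q : ℝ))^2 := by rw [hsupp]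
      _ ≤ (Np.card : ℝ) * ∑ Q ∈ Np, (Zn Q : ℝ)^2 := sq_sum_le_card_mul_sum_sq
      _ ≤ (Np.card : ℝ) * ∑ Q ∈ Ω, (Zn Q : ℝ)^2 := by
          apply mul_le_mul_of_nonneg_left _ (by positivity)
          exact Finset.sum_le_sum_of_subset_of_nonneg (Finset.filter_subset _ _)
            (fun Q _ _ => sq_nonneg _)
  -- identify the bad set with {Zn = 0}
  have hN0 : (Ω.filter (fun Q => ¬ ∃ σ ∈ S, ∀ j, xorSat σ (Q j)))
      = Ω.filter (fun Q => ¬ Zn Q ≠ 0) := by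
    apply Finset.filter_congr
    intro Q _
    have : Zn Q ≠ 0 ↔ ∃ σ ∈ S, ∀ j, xorSat σ (Q j) := by
      rw [hZn]
      simp only [ne_eq, Finset.card_eq_zero]
      rw [← ne_eq, ← Finset.nonempty_iff_ne_empty, Finset.filter_nonempty_iff]
    rw [not_iff_not]
    exact this.symm
  have hcount : (Np.card : ℝ) +
      ((Ω.filter (fun Q => ¬ ∃ σ ∈ S, ∀ j, xorSat σ (Q j))).card : ℝ)
      = (Fintype.card (Fin m → Finset (Fin n) × Bool) : ℝ) := by
    rw [hN0]
    have := Finset.card_filter_add_card_filter_not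
      (s := Ω) (p := fun Q => Zn Q ≠ 0)
    rw [← Finset.card_univ]
    exact_mod_cast this
  -- total card
  have hcard : (Fintype.card (Fin m → Finset (Fin n) × Bool) : ℝ)
      = ((2:ℝ)^(n-1))^m * (2:ℝ)^m * (2:ℝ)^m := by
    rw [Fintype.card_fun]
    simp only [Fintype.card_prod, Fintype.card_finset, Fintype.card_fin, Fintype.card_bool,
      Fintype.card_fin]
    push_cast
    rw [show (2:ℝ)^n = (2:ℝ)^(n-1) * 2 by rw [← pow_succ]; congr 1; omega, mul_pow, mul_pow]
  have hu : ((2:ℝ)^n)^m = ((2:ℝ)^(n-1))^m * (2:ℝ)^m := by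
    rw [show (2:ℝ)^n = (2:ℝ)^(n-1) * 2 by rw [← pow_succ]; congr 1; omega, mul_pow]
  -- apply arithmetic lemma
  have := arith_key (S.card : ℝ) (((2:ℝ)^(n-1))^m) ((2:ℝ)^m) (Np.card : ℝ)
    (((Ω.filter (fun Q => ¬ ∃ σ ∈ S, ∀ j, xorSat σ (Q j))).card : ℝ))
    (by positivity) (by positivity) (by positivity) (by positivity)
    (by rw [add_comm]; rw [hcount, hcard])
    (by
      rw [← hu, ← sum1]
      calc (∑ Q ∈ Ω, (Zn Q : ℝ))^2 ≤ (Np.card : ℝ) * ∑ Q ∈ Ω, (Zn Q : ℝ)^2 := hCS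
        _ ≤ (Np.card : ℝ) * ((S.card : ℝ) * ((2:ℝ)^n)^m + (S.card : ℝ)^2 * ((2:ℝ)^(n-1))^m) := by
            apply mul_le_mul_of_nonneg_left sum2 (by positivity)
        _ = (Np.card : ℝ) * ((S.card:ℝ) * (((2:ℝ)^(n-1))^m * (2:ℝ)^m)
              + (S.card:ℝ)^2 * ((2:ℝ)^(n-1))^m) := by rw [hu]
        _ = _ := by rw [sum1, hu])
  calc (((Ω.filter (fun Q => ¬ ∃ σ ∈ S, ∀ j, xorSat σ (Q j))).card : ℝ)) * S.card
      ≤ ((2:ℝ)^(n-1))^m * (2:ℝ)^m * (2:ℝ)^m * (2:ℝ)^m := this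
    _ = (Fintype.card (Fin m → Finset (Fin n) × Bool) : ℝ) * 2^m := by rw [hcard]

lemma card_filter_prod {α β : Type*} [Fintype α] [Fintype β] (p : α × β → Prop)
    [DecidablePred p] :
    ((univ : Finset (α × β)).filter p).card =
      ∑ a : α, ((univ : Finset β).filter fun b => p (a, b)).card := by
  rw [Finset.card_filter, ← Finset.univ_product_univ, Finset.sum_product]
  refine Finset.sum_congr rfl fun a _ => ?_
  rw [Finset.card_filter]

set_option maxHeartbeats 2000000 in
/-- Transfer lemma (satisfiable side): if `(B_i)` is a convergent sequence of
positive reals with `B_i^n ≤ #F_k(n,rn)` w.h.p. for each `i`, and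
`2^s < lim B_i`, then w.h.p. the random `k`-CNF-XOR formula
`ψ_k(n, rn, sn) = F_k(n,rn) ∧ Q(n,sn)` is satisfiable. -/
theorem whp_cnfxor_sat_of_lower_bounds (k : ℕ) (hk : 2 ≤ k) (s r : ℝ)
    (hs : 0 ≤ s) (hr : 0 ≤ r) (B : ℕ → ℝ) (hBpos : ∀ i, 0 < B i) (L : ℝ)
    (hBlim : Tendsto B atTop (nhds L))
    (hwhp : ∀ i : ℕ,
      Tendsto
        (fun n : ℕ =>
          ((Finset.univ.filter fun F : Fin ⌈r * (n : ℝ)⌉₊ → KClause n k =>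
              (B i) ^ n ≤ (numSat F : ℝ)).card : ℝ) /
            (Fintype.card (Fin ⌈r * (n : ℝ)⌉₊ → KClause n k)))
        atTop (nhds 1))
    (hsL : (2 : ℝ) ^ s < L) :
    Tendsto
      (fun n : ℕ =>
        ((Finset.univ.filter fun FQ :
            (Fin ⌈r * (n : ℝ)⌉₊ → KClause n k) ×
              (Fin ⌈s * (n : ℝ)⌉₊ → Finset (Fin n) × Bool) =>
            psiSat FQ).card : ℝ) /
          (Fintype.card ((Fin ⌈r * (n : ℝ)⌉₊ → KClause n k) ×
            (Fin ⌈s * (n : ℝ)⌉₊ → Finset (Fin n) × Bool))))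
      atTop (nhds 1) := by
  classical
  obtain ⟨i, hBi⟩ : ∃ i, (2:ℝ)^s < B i :=
    (hBlim.eventually (eventually_gt_nhds hsL)).exists
  have hb0 : 0 < B i := hBpos i
  have h2s : (0:ℝ) < (2:ℝ)^s := Real.rpow_pos_of_pos (by norm_num) s
  set q : ℝ := (2:ℝ)^s / B i with hqdef
  have hq0 : 0 ≤ q := by positivity
  have hq1 : q < 1 := (div_lt_one hb0).mpr hBi
  set P : ℕ → ℝ := fun n =>
    ((Finset.univ.filter fun F : Fin ⌈r * (n : ℝ)⌉₊ → KClause n k =>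
        (B i) ^ n ≤ (numSat F : ℝ)).card : ℝ) /
      (Fintype.card (Fin ⌈r * (n : ℝ)⌉₊ → KClause n k)) with hPdef
  set T : ℕ → ℝ := fun n =>
    ((Finset.univ.filter fun FQ :
        (Fin ⌈r * (n : ℝ)⌉₊ → KClause n k) ×
          (Fin ⌈s * (n : ℝ)⌉₊ → Finset (Fin n) × Bool) =>
        psiSat FQ).card : ℝ) /
      (Fintype.card ((Fin ⌈r * (n : ℝ)⌉₊ → KClause n k) ×
        (Fin ⌈s * (n : ℝ)⌉₊ → Finset (Fin n) × Bool))) with hTdef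
  have hlow : Tendsto (fun n : ℕ => P n - 2 * q ^ n) atTop (nhds 1) := by
    have h0 := (tendsto_pow_atTop_nhds_zero_of_lt_one hq0 hq1).const_mul (2:ℝ)
    have := (hwhp i).sub h0
    simpa only [mul_zero, sub_zero] using this
  apply tendsto_of_tendsto_of_tendsto_of_le_of_le' hlow tendsto_const_nhds
  · -- lower bound eventually
    filter_upwards [eventually_ge_atTop (max k 1)] with n hn
    have hkn : k ≤ n := le_trans (le_max_left _ _) hn
    have hn1 : 1 ≤ n := le_trans (le_max_right _ _) hn
    set m₁ := ⌈r * (n : ℝ)⌉₊ with hm₁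
    set m₂ := ⌈s * (n : ℝ)⌉₊ with hm₂
    -- nonemptiness / positivity of cardinalities
    have hKC : Nonempty (KClause n k) := by
      obtain ⟨A, -, hA⟩ := Finset.exists_subset_card_eq (s := (univ : Finset (Fin n))) (n := k)
        (by simpa using hkn)
      exact ⟨⟨⟨A, hA⟩, fun _ => true⟩⟩
    haveI := hKC
    have hCf : 0 < (Fintype.card (Fin m₁ → KClause n k)) := Fintype.card_pos
    have hCq : 0 < (Fintype.card (Fin m₂ → Finset (Fin n) × Bool)) := Fintype.card_pos
    set Cf : ℝ := (Fintype.card (Fin m₁ → KClause n k) : ℝ) with hCfdef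
    set Cq : ℝ := (Fintype.card (Fin m₂ → Finset (Fin n) × Bool) : ℝ) with hCqdef
    have hCf0 : 0 < Cf := by rw [hCfdef]; exact_mod_cast hCf
    have hCq0 : 0 < Cq := by rw [hCqdef]; exact_mod_cast hCq
    set e : ℝ := 2 * q ^ n with hedef
    have he0 : 0 ≤ e := by positivity
    -- the ceiling bound : 2^m₂ ≤ e * (B i)^n
    have hm2bound : (2:ℝ) ^ m₂ ≤ e * (B i) ^ n := by
      have h1 : ((m₂ : ℝ)) ≤ s * n + 1 := by
        have := Nat.ceil_lt_add_one (by positivity : (0:ℝ) ≤ s * n)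
        exact this.le
      have h2 : (2:ℝ) ^ (m₂ : ℕ) = (2:ℝ) ^ ((m₂ : ℕ) : ℝ) := by
        rw [Real.rpow_natCast]
      have h3 : (2:ℝ) ^ ((m₂ : ℕ) : ℝ) ≤ (2:ℝ) ^ (s * n + 1) :=
        Real.rpow_le_rpow_of_exponent_le one_le_two h1
      have h4 : (2:ℝ) ^ (s * n + 1) = 2 * ((2:ℝ)^s) ^ n := by
        rw [Real.rpow_add (by norm_num), Real.rpow_one,
          Real.rpow_mul (by norm_num : (0:ℝ) ≤ 2), Real.rpow_natCast]
        ring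
      have h5 : e * (B i)^n = 2 * ((2:ℝ)^s)^n := by
        rw [hedef, hqdef, div_pow, mul_assoc, div_mul_cancel₀]
        positivity
      rw [h2, h5]
      exact h3.trans_eq h4
    -- Fubini and the per-F bound
    have fubini : (((univ : Finset ((Fin m₁ → KClause n k) ×
        (Fin m₂ → Finset (Fin n) × Bool))).filter fun FQ => psiSat FQ).card : ℝ)
        = ∑ F : Fin m₁ → KClause n k,
            (((univ : Finset (Fin m₂ → Finset (Fin n) × Bool)).filter
              fun Q => psiSat (F, Q)).card : ℝ) := by
      rw [card_filter_prod (fun FQ => psiSat FQ)]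
      push_cast
      rfl
    set G := (univ : Finset (Fin m₁ → KClause n k)).filter
      (fun F => (B i) ^ n ≤ (numSat F : ℝ)) with hGdef
    have perF : ∀ F ∈ G,
        Cq * (1 - e) ≤ (((univ : Finset (Fin m₂ → Finset (Fin n) × Bool)).filter
          fun Q => psiSat (F, Q)).card : ℝ) := by
      intro F hF
      have hFg : (B i) ^ n ≤ (numSat F : ℝ) := (Finset.mem_filter.mp hF).2
      set S := (univ : Finset (Fin n → Bool)).filter (fun σ => ∀ j, kSat σ (F j)) with hSdef
      have hiff : ∀ Q : Fin m₂ → Finset (Fin n) × Bool,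
          psiSat (F, Q) ↔ ∃ σ ∈ S, ∀ j, xorSat σ (Q j) := by
        intro Q
        simp [psiSat, hSdef, Finset.mem_filter]
      have hcompl : (((univ : Finset (Fin m₂ → Finset (Fin n) × Bool)).filter
            fun Q => psiSat (F, Q)).card : ℝ)
          = Cq - (((univ : Finset (Fin m₂ → Finset (Fin n) × Bool)).filter
            fun Q => ¬ ∃ σ ∈ S, ∀ j, xorSat σ (Q j)).card : ℝ) := by
        have h1 : ((univ : Finset (Fin m₂ → Finset (Fin n) × Bool)).filter
            fun Q => ¬ psiSat (F, Q)) =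
            ((univ : Finset (Fin m₂ → Finset (Fin n) × Bool)).filter
            fun Q => ¬ ∃ σ ∈ S, ∀ j, xorSat σ (Q j)) := by
          apply Finset.filter_congr
          intro Q _
          exact not_congr (hiff Q)
        have h2 := Finset.card_filter_add_card_filter_not
          (s := (univ : Finset (Fin m₂ → Finset (Fin n) × Bool)))
          (p := fun Q => psiSat (F, Q))
        rw [h1, Finset.card_univ] at h2
        have h3 : (((univ : Finset (Fin m₂ → Finset (Fin n) × Bool)).filter
            fun Q => psiSat (F, Q)).card : ℝ) +
            (((univ : Finset (Fin m₂ → Finset (Fin n) × Bool)).filter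
            fun Q => ¬ ∃ σ ∈ S, ∀ j, xorSat σ (Q j)).card : ℝ) = Cq := by
          rw [hCqdef]
          exact_mod_cast h2
        linarith
      have hkey := key_second_moment n m₂ hn1 S
      have hScard : (B i)^n ≤ (S.card : ℝ) := hFg
      have hbn : (0:ℝ) < (B i)^n := by positivity
      have hN0 : (((univ : Finset (Fin m₂ → Finset (Fin n) × Bool)).filter
          fun Q => ¬ ∃ σ ∈ S, ∀ j, xorSat σ (Q j)).card : ℝ) ≤ Cq * e := by
        set N0 := (((univ : Finset (Fin m₂ → Finset (Fin n) × Bool)).filter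
          fun Q => ¬ ∃ σ ∈ S, ∀ j, xorSat σ (Q j)).card : ℝ) with hN0def
        have hN0nn : 0 ≤ N0 := by positivity
        have h1 : N0 * (B i)^n ≤ Cq * (2:ℝ)^m₂ := by
          calc N0 * (B i)^n ≤ N0 * S.card := by
                apply mul_le_mul_of_nonneg_left hScard hN0nn
            _ ≤ Cq * (2:ℝ)^m₂ := hkey
        have h2 : Cq * (2:ℝ)^m₂ ≤ Cq * (e * (B i)^n) := by
          apply mul_le_mul_of_nonneg_left hm2bound hCq0.le
        have h3 : N0 * (B i)^n ≤ (Cq * e) * (B i)^n := by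
          calc N0 * (B i)^n ≤ Cq * (e * (B i)^n) := h1.trans h2
            _ = (Cq * e) * (B i)^n := by ring
        exact le_of_mul_le_mul_right h3 hbn
      rw [hcompl]
      nlinarith [hN0]
    -- summing
    have hsum : G.card * (Cq * (1 - e)) ≤
        (((univ : Finset ((Fin m₁ → KClause n k) ×
          (Fin m₂ → Finset (Fin n) × Bool))).filter fun FQ => psiSat FQ).card : ℝ) := by
      rw [fubini]
      calc (G.card : ℝ) * (Cq * (1 - e))
          = ∑ _F ∈ G, Cq * (1 - e) := by rw [Finset.sum_const, nsmul_eq_mul]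
        _ ≤ ∑ F ∈ G, (((univ : Finset (Fin m₂ → Finset (Fin n) × Bool)).filter
              fun Q => psiSat (F, Q)).card : ℝ) := Finset.sum_le_sum perF
        _ ≤ ∑ F : Fin m₁ → KClause n k,
              (((univ : Finset (Fin m₂ → Finset (Fin n) × Bool)).filter
              fun Q => psiSat (F, Q)).card : ℝ) := by
            apply Finset.sum_le_sum_of_subset_of_nonneg (Finset.filter_subset _ _)
            intro F _ _
            positivity
    -- convert to probabilities
    have hcardprod : ((Fintype.card ((Fin m₁ → KClause n k) ×
        (Fin m₂ → Finset (Fin n) × Bool))) : ℝ) = Cf * Cq := by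
      rw [Fintype.card_prod]; push_cast; rfl
    have hPn1 : P n ≤ 1 := by
      rw [hPdef]
      apply div_le_one_of_le₀
      · exact_mod_cast Finset.card_filter_le _ _
      · positivity
    have hPn : P n = (G.card : ℝ) / Cf := by
      simp only [hPdef, hGdef, hCfdef, hm₁]
      convert rfl
    have hTn : T n = (((univ : Finset ((Fin m₁ → KClause n k) ×
        (Fin m₂ → Finset (Fin n) × Bool))).filter fun FQ => psiSat FQ).card : ℝ) /
        ((Fintype.card ((Fin m₁ → KClause n k) ×
          (Fin m₂ → Finset (Fin n) × Bool))) : ℝ) := by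
      simp only [hTdef, hm₁, hm₂]
      convert rfl
    show P n - 2 * q ^ n ≤ T n
    rw [hTn, hcardprod]
    have step1 : (G.card : ℝ) * (Cq * (1 - e)) / (Cf * Cq) = ((G.card : ℝ) / Cf) * (1 - e) := by
      field_simp
    have step2 : ((G.card : ℝ) / Cf) * (1 - e) ≤
        (((univ : Finset ((Fin m₁ → KClause n k) ×
          (Fin m₂ → Finset (Fin n) × Bool))).filter fun FQ => psiSat FQ).card : ℝ) /
          (Cf * Cq) := by
      rw [← step1]
      gcongr
    have step3 : P n - e ≤ ((G.card : ℝ) / Cf) * (1 - e) := by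
      rw [hPn]
      have hG1 : (G.card : ℝ) / Cf ≤ 1 := hPn1
      have hG0 : 0 ≤ (G.card : ℝ) / Cf := by positivity
      nlinarith
    calc P n - 2 * q ^ n = P n - e := by rw [hedef]
      _ ≤ ((G.card : ℝ) / Cf) * (1 - e) := step3
      _ ≤ _ := step2
  · -- upper bound : T n ≤ 1 always
    filter_upwards with n
    apply div_le_one_of_le₀
    · exact_mod_cast Finset.card_filter_le _ _
    · positivity
end

section
/- Let k ≥ 2, s ≥ 0, r ≥ 0, and let (B_i) be a convergent sequence of positive reals such that for each i, with high probability #F_k(n,rn) ≤ B_i^n. If 2^s > lim_{i→∞} B_i, then with high probability the random k-CNF-XOR formula ψ_k(n, rn, sn) = F_k(n,rn) ∧ Q(n,sn) is unsatisfiable. -/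
open Finset Filter

lemma xor_count {n : ℕ} (σ : Fin n → Bool) :
    (Finset.univ.filter fun C : Finset (Fin n) × Bool => xorSat σ C).card = 2 ^ n := by
  rw [Finset.card_filter, Fintype.sum_prod_type]
  have : ∀ A : Finset (Fin n),
      (∑ b : Bool, if xorSat σ (A, b) then (1:ℕ) else 0) = 1 := by
    intro A
    rcases Nat.mod_two_eq_zero_or_one ((A.filter fun i => σ i).card) with h | h <;>
      simp [xorSat, h, Finset.filter_insert, Finset.filter_singleton]
  simp only [this, Finset.sum_const, Finset.card_univ, smul_eq_mul, mul_one]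
  simp

lemma Qall_count {n m : ℕ} (σ : Fin n → Bool) :
    (Finset.univ.filter fun Q : Fin m → Finset (Fin n) × Bool =>
      ∀ j, xorSat σ (Q j)).card = (2 ^ n) ^ m := by
  rw [← Fintype.card_subtype]
  rw [Fintype.card_congr (Equiv.subtypePiEquivPi (p := fun _ C => xorSat σ C))]
  rw [Fintype.card_pi]
  simp [Fintype.card_subtype, xor_count σ]

lemma sat_le {n k m₁ m₂ : ℕ} (F : Fin m₁ → KClause n k) :
    (Finset.univ.filter fun Q : Fin m₂ → Finset (Fin n) × Bool =>
      psiSat (F, Q)).card ≤ numSat F * (2 ^ n) ^ m₂ := by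
  have hsub : (Finset.univ.filter fun Q : Fin m₂ → Finset (Fin n) × Bool => psiSat (F, Q)) ⊆
      (Finset.univ.filter fun σ : Fin n → Bool => ∀ j, kSat σ (F j)).biUnion
        (fun σ => Finset.univ.filter fun Q : Fin m₂ → Finset (Fin n) × Bool =>
          ∀ j, xorSat σ (Q j)) := by
    intro Q hQ
    rw [Finset.mem_filter] at hQ
    obtain ⟨σ, hF, hX⟩ := hQ.2
    exact Finset.mem_biUnion.2 ⟨σ, Finset.mem_filter.2 ⟨Finset.mem_univ _, hF⟩,
      Finset.mem_filter.2 ⟨Finset.mem_univ _, hX⟩⟩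
  calc _ ≤ _ := Finset.card_le_card hsub
    _ ≤ _ := Finset.card_biUnion_le
    _ = numSat F * (2 ^ n) ^ m₂ := by
        rw [Finset.sum_congr rfl fun σ _ => Qall_count (m := m₂) σ, Finset.sum_const,
          smul_eq_mul, numSat]

lemma sat_split {n k m₁ m₂ : ℕ} :
    (Finset.univ.filter fun FQ : (Fin m₁ → KClause n k) × (Fin m₂ → Finset (Fin n) × Bool) =>
      psiSat FQ).card
    = ∑ F : Fin m₁ → KClause n k,
        (Finset.univ.filter fun Q : Fin m₂ → Finset (Fin n) × Bool => psiSat (F, Q)).card := by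
  rw [Finset.card_filter, Fintype.sum_prod_type]
  exact Finset.sum_congr rfl fun F _ => (Finset.card_filter _ _).symm

lemma main_bound (n k m₁ m₂ : ℕ) (b : ℝ) (hb : 0 ≤ b) :
    ((Finset.univ.filter fun FQ : (Fin m₁ → KClause n k) ×
        (Fin m₂ → Finset (Fin n) × Bool) => psiSat FQ).card : ℝ)
    ≤ ((Fintype.card (Fin m₁ → KClause n k) : ℝ) -
        (Finset.univ.filter fun F : Fin m₁ → KClause n k =>
          (numSat F : ℝ) ≤ b ^ n).card) *
        (Fintype.card (Fin m₂ → Finset (Fin n) × Bool))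
      + ((Fintype.card (Fin m₁ → KClause n k)):ℝ) * (b ^ n * 2 ^ (n * m₂)) := by
  classical
  set p : (Fin m₁ → KClause n k) → Prop := fun F => (numSat F : ℝ) ≤ b ^ n with hp
  have hsplit := Finset.sum_filter_add_sum_filter_not Finset.univ p
    (fun F => ((Finset.univ.filter fun Q : Fin m₂ → Finset (Fin n) × Bool =>
      psiSat (F, Q)).card : ℝ))
  rw [sat_split (n := n) (k := k) (m₁ := m₁) (m₂ := m₂)]
  push_cast
  rw [← hsplit]
  have hgood : ∑ F ∈ Finset.univ.filter p,
      ((Finset.univ.filter fun Q : Fin m₂ → Finset (Fin n) × Bool =>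
        psiSat (F, Q)).card : ℝ)
      ≤ ((Fintype.card (Fin m₁ → KClause n k)):ℝ) * (b ^ n * 2 ^ (n * m₂)) := by
    calc ∑ F ∈ Finset.univ.filter p, ((Finset.univ.filter fun Q : Fin m₂ → Finset (Fin n) × Bool =>
          psiSat (F, Q)).card : ℝ)
        ≤ ∑ _F ∈ Finset.univ.filter p, (b ^ n * 2 ^ (n * m₂)) := by
          refine Finset.sum_le_sum fun F hF => ?_
          have h1 : ((Finset.univ.filter fun Q : Fin m₂ → Finset (Fin n) × Bool =>
              psiSat (F, Q)).card : ℝ) ≤ (numSat F : ℝ) * (2 ^ n) ^ m₂ := by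
            exact_mod_cast Nat.cast_le.2 (sat_le F)
          have h2 : (numSat F : ℝ) ≤ b ^ n := (Finset.mem_filter.1 hF).2
          have h3 : ((2:ℝ) ^ n) ^ m₂ = 2 ^ (n * m₂) := by rw [← pow_mul]
          nlinarith [pow_nonneg (by norm_num : (0:ℝ) ≤ 2) (n * m₂),
            (Nat.cast_nonneg (numSat F) : (0:ℝ) ≤ (numSat F : ℝ))]
      _ ≤ ((Fintype.card (Fin m₁ → KClause n k)):ℝ) * (b ^ n * 2 ^ (n * m₂)) := by
          rw [Finset.sum_const, nsmul_eq_mul]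
          have : ((Finset.univ.filter p).card : ℝ) ≤ Fintype.card (Fin m₁ → KClause n k) := by
            exact_mod_cast Nat.cast_le.2 (le_trans (Finset.card_filter_le _ _)
              (le_of_eq Finset.card_univ))
          have hnn : (0:ℝ) ≤ b ^ n * 2 ^ (n * m₂) := by positivity
          nlinarith
  have hbad : ∑ F ∈ Finset.univ.filter fun F => ¬ p F,
      ((Finset.univ.filter fun Q : Fin m₂ → Finset (Fin n) × Bool =>
        psiSat (F, Q)).card : ℝ)
      ≤ ((Fintype.card (Fin m₁ → KClause n k) : ℝ) -
          (Finset.univ.filter p).card) *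
          (Fintype.card (Fin m₂ → Finset (Fin n) × Bool)) := by
    have hcard : ((Finset.univ.filter fun F => ¬ p F).card : ℝ)
        = (Fintype.card (Fin m₁ → KClause n k) : ℝ) - (Finset.univ.filter p).card := by
      have := Finset.card_filter_add_card_filter_not (s := Finset.univ) (p := p)
      rw [Finset.card_univ] at this
      push_cast [← this]
      ring
    calc _ ≤ ∑ _F ∈ Finset.univ.filter fun F => ¬ p F,
          ((Fintype.card (Fin m₂ → Finset (Fin n) × Bool)) : ℝ) := by
          refine Finset.sum_le_sum fun F _ => ?_
          exact_mod_cast Nat.cast_le.2 (le_trans (Finset.card_filter_le _ _)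
            (le_of_eq Finset.card_univ))
      _ = _ := by rw [Finset.sum_const, nsmul_eq_mul, hcard]
  linarith

lemma kclause_nonempty {n k : ℕ} (hkn : k ≤ n) : Nonempty (KClause n k) := by
  obtain ⟨A, -, hA⟩ := Finset.exists_subset_card_eq (s := (Finset.univ : Finset (Fin n))) (n := k)
    (by simpa using hkn)
  exact ⟨⟨⟨A, hA⟩, fun _ => true⟩⟩

lemma per_n (n k m₁ m₂ : ℕ) (hkn : k ≤ n) (b t : ℝ) (hb : 0 ≤ b) (ht0 : 0 ≤ t)
    (ht : b ^ n ≤ t * 2 ^ m₂) :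
    ((Finset.univ.filter fun F : Fin m₁ → KClause n k =>
        (numSat F : ℝ) ≤ b ^ n).card : ℝ) /
      (Fintype.card (Fin m₁ → KClause n k)) - t
    ≤ ((Finset.univ.filter fun FQ : (Fin m₁ → KClause n k) ×
          (Fin m₂ → Finset (Fin n) × Bool) => ¬ psiSat FQ).card : ℝ) /
        (Fintype.card ((Fin m₁ → KClause n k) × (Fin m₂ → Finset (Fin n) × Bool)))
    ∧ ((Finset.univ.filter fun FQ : (Fin m₁ → KClause n k) ×
          (Fin m₂ → Finset (Fin n) × Bool) => ¬ psiSat FQ).card : ℝ) /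
        (Fintype.card ((Fin m₁ → KClause n k) × (Fin m₂ → Finset (Fin n) × Bool))) ≤ 1 := by
  classical
  haveI : Nonempty (KClause n k) := kclause_nonempty hkn
  set cF : ℝ := (Fintype.card (Fin m₁ → KClause n k) : ℝ) with hcF
  set cQ : ℝ := (Fintype.card (Fin m₂ → Finset (Fin n) × Bool) : ℝ) with hcQ
  have hcFpos : 0 < cF := by rw [hcF]; exact_mod_cast (Fintype.card_pos : 0 < Fintype.card (Fin m₁ → KClause n k))
  have hcQpos : 0 < cQ := by rw [hcQ]; exact_mod_cast (Fintype.card_pos : 0 < Fintype.card (Fin m₂ → Finset (Fin n) × Bool))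
  have htot : (Fintype.card ((Fin m₁ → KClause n k) ×
      (Fin m₂ → Finset (Fin n) × Bool)) : ℝ) = cF * cQ := by
    rw [Fintype.card_prod]; push_cast; rfl
  set S : ℝ := ((Finset.univ.filter fun FQ : (Fin m₁ → KClause n k) ×
      (Fin m₂ → Finset (Fin n) × Bool) => psiSat FQ).card : ℝ) with hS
  set U : ℝ := ((Finset.univ.filter fun FQ : (Fin m₁ → KClause n k) ×
      (Fin m₂ → Finset (Fin n) × Bool) => ¬ psiSat FQ).card : ℝ) with hU
  set G : ℝ := ((Finset.univ.filter fun F : Fin m₁ → KClause n k =>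
      (numSat F : ℝ) ≤ b ^ n).card : ℝ) with hG
  have hSU : S + U = cF * cQ := by
    have := Finset.card_filter_add_card_filter_not
      (s := (Finset.univ : Finset ((Fin m₁ → KClause n k) ×
        (Fin m₂ → Finset (Fin n) × Bool)))) (p := fun FQ => psiSat FQ)
    rw [Finset.card_univ, Fintype.card_prod] at this
    rw [hS, hU, hcF, hcQ, ← Nat.cast_mul, ← this]
    push_cast
    ring
  have hSnn : 0 ≤ S := Nat.cast_nonneg _
  have hUnn : 0 ≤ U := Nat.cast_nonneg _
  have hGle : G ≤ cF := by
    exact_mod_cast Nat.cast_le.2 (le_trans (Finset.card_filter_le _ _)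
      (le_of_eq Finset.card_univ))
  have hcQval : cQ = 2 ^ (n * m₂) * 2 ^ m₂ := by
    rw [hcQ, Fintype.card_fun, Fintype.card_prod, Fintype.card_finset]
    rw [Fintype.card_fin, Fintype.card_bool, Fintype.card_fin]
    push_cast
    rw [mul_pow, ← pow_mul]
  have hmain : S ≤ (cF - G) * cQ + cF * (b ^ n * 2 ^ (n * m₂)) :=
    main_bound n k m₁ m₂ b hb
  have key : S ≤ (cF - G) * cQ + t * (cF * cQ) := by
    have h2 : cF * (b ^ n * 2 ^ (n * m₂)) ≤ t * (cF * cQ) := by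
      rw [hcQval]
      have : b ^ n * 2 ^ (n * m₂) ≤ (t * 2 ^ m₂) * 2 ^ (n * m₂) := by
        have := pow_nonneg (by norm_num : (0:ℝ) ≤ 2) (n * m₂)
        nlinarith
      nlinarith
    linarith
  constructor
  · rw [htot]
    rw [div_sub' (ne_of_gt hcFpos), div_le_div_iff₀ hcFpos (by positivity)]
    have hUeq : U = cF * cQ - S := by linarith
    rw [hUeq]
    nlinarith
  · rw [htot, div_le_one (by positivity)]
    linarith

/-- Transfer lemma (unsatisfiable side): if `(B_i)` is a convergent sequence of
positive reals with `#F_k(n,rn) ≤ B_i^n` w.h.p. for each `i`, and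
`2^s > lim B_i`, then w.h.p. the random `k`-CNF-XOR formula
`ψ_k(n, rn, sn) = F_k(n,rn) ∧ Q(n,sn)` is unsatisfiable. -/
theorem whp_cnfxor_unsat_of_upper_bounds (k : ℕ) (hk : 2 ≤ k) (s r : ℝ)
    (hs : 0 ≤ s) (hr : 0 ≤ r) (B : ℕ → ℝ) (hBpos : ∀ i, 0 < B i) (L : ℝ)
    (hBlim : Tendsto B atTop (nhds L))
    (hwhp : ∀ i : ℕ,
      Tendsto
        (fun n : ℕ =>
          ((Finset.univ.filter fun F : Fin ⌈r * (n : ℝ)⌉₊ → KClause n k =>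
              (numSat F : ℝ) ≤ (B i) ^ n).card : ℝ) /
            (Fintype.card (Fin ⌈r * (n : ℝ)⌉₊ → KClause n k)))
        atTop (nhds 1))
    (hsL : L < (2 : ℝ) ^ s) :
    Tendsto
      (fun n : ℕ =>
        ((Finset.univ.filter fun FQ :
            (Fin ⌈r * (n : ℝ)⌉₊ → KClause n k) ×
              (Fin ⌈s * (n : ℝ)⌉₊ → Finset (Fin n) × Bool) =>
            ¬ psiSat FQ).card : ℝ) /
          (Fintype.card ((Fin ⌈r * (n : ℝ)⌉₊ → KClause n k) ×
            (Fin ⌈s * (n : ℝ)⌉₊ → Finset (Fin n) × Bool))))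
      atTop (nhds 1) := by
  obtain ⟨i, hi⟩ : ∃ i, B i < (2:ℝ) ^ s :=
    (hBlim.eventually (eventually_lt_nhds hsL)).exists
  have hb : 0 < B i := hBpos i
  have h2s : (0:ℝ) < (2:ℝ) ^ s := Real.rpow_pos_of_pos (by norm_num) s
  set b : ℝ := B i with hbdef
  set c : ℝ := b / (2:ℝ) ^ s with hcdef
  have hc0 : 0 ≤ c := le_of_lt (div_pos hb h2s)
  have hc1 : c < 1 := (div_lt_one h2s).2 hi
  have hlim : Tendsto (fun n : ℕ =>
      ((Finset.univ.filter fun F : Fin ⌈r * (n : ℝ)⌉₊ → KClause n k =>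
          (numSat F : ℝ) ≤ b ^ n).card : ℝ) /
        (Fintype.card (Fin ⌈r * (n : ℝ)⌉₊ → KClause n k)) - c ^ n)
      atTop (nhds 1) := by
    have := (hwhp i).sub (tendsto_pow_atTop_nhds_zero_of_lt_one hc0 hc1)
    simpa using this
  have hkey : ∀ n : ℕ, b ^ n ≤ c ^ n * 2 ^ ⌈s * (n : ℝ)⌉₊ := by
    intro n
    have hceil : s * n ≤ (⌈s * (n:ℝ)⌉₊ : ℝ) := Nat.le_ceil _
    have hpow : ((2:ℝ) ^ s) ^ n ≤ (2:ℝ) ^ (⌈s * (n:ℝ)⌉₊ : ℕ) := by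
      rw [← Real.rpow_natCast ((2:ℝ) ^ s) n, ← Real.rpow_natCast (2:ℝ) ⌈s * (n:ℝ)⌉₊,
        ← Real.rpow_mul (by norm_num : (0:ℝ) ≤ 2)]
      exact Real.rpow_le_rpow_of_exponent_le one_le_two hceil
    have hcp : c ^ n = b ^ n / ((2:ℝ) ^ s) ^ n := div_pow b _ n
    rw [hcp, div_mul_eq_mul_div, le_div_iff₀ (by positivity)]
    have := pow_nonneg hb.le n
    nlinarith
  refine tendsto_of_tendsto_of_tendsto_of_le_of_le' hlim tendsto_const_nhds ?_ ?_
  · filter_upwards [eventually_ge_atTop k] with n hn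
    exact (per_n n k ⌈r * (n:ℝ)⌉₊ ⌈s * (n:ℝ)⌉₊ hn b (c ^ n) hb.le
      (by positivity) (hkey n)).1
  · filter_upwards [eventually_ge_atTop k] with n hn
    exact (per_n n k ⌈r * (n:ℝ)⌉₊ ⌈s * (n:ℝ)⌉₊ hn b (c ^ n) hb.le
      (by positivity) (hkey n)).2
end

section
/- Let k ≥ 2, s ≥ 0, r ≥ 0. If s > 1 + r·log₂(1 − 2^(−k)), then with high probability the random k-CNF-XOR formula ψ_k(n, rn, sn) is unsatisfiable. -/
open Finset Filter

lemma card_exists_eq {ι : Type*} [Fintype ι] [DecidableEq ι] (t : ι → Bool) :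
    Fintype.card {f : ι → Bool // ∃ i, t i = f i} = 2 ^ Fintype.card ι - 1 := by
  have h1 : Fintype.card {f : ι → Bool // ¬ ∃ i, t i = f i} = 1 := by
    rw [Fintype.card_eq_one_iff]
    refine ⟨⟨fun i => !t i, by simp⟩, ?_⟩
    rintro ⟨f, hf⟩
    push_neg at hf
    refine Subtype.ext (funext fun i => ?_)
    have := hf i
    cases hti : t i <;> cases hfi : f i <;> simp_all
  have h2 := Fintype.card_subtype_compl (fun f : ι → Bool => ∃ i, t i = f i)
  have h3 : Fintype.card (ι → Bool) = 2 ^ Fintype.card ι := by simp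
  have h4 : Fintype.card {f : ι → Bool // ∃ i, t i = f i} ≤ Fintype.card (ι → Bool) :=
    Fintype.card_subtype_le _
  rw [h1, h3] at h2
  rw [h3] at h4
  have hb : (2 ^ Fintype.card ι) = 1 + Fintype.card {f : ι → Bool // ∃ i, t i = f i} :=
    ((Nat.sub_eq_iff_eq_add h4).mp h2.symm)
  rw [hb, Nat.add_sub_cancel_left]

lemma card_KClause (n k : ℕ) : Fintype.card (KClause n k) = n.choose k * 2 ^ k := by
  have e : KClause n k ≃ Σ A : {A : Finset (Fin n) // A.card = k}, ({x // x ∈ A.1} → Bool) :=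
    Equiv.refl _
  rw [Fintype.card_congr e]
  rw [Fintype.card_sigma]
  have : ∀ A : {A : Finset (Fin n) // A.card = k},
      Fintype.card ({x // x ∈ A.1} → Bool) = 2 ^ k := by
    intro A
    rw [Fintype.card_fun]
    simp [Fintype.card_coe, A.2]
  simp only [this, Finset.sum_const, smul_eq_mul, card_univ, Fintype.card_finset_len,
    Fintype.card_fin]

lemma card_kSat (n k : ℕ) (σ : Fin n → Bool) :
    Fintype.card {C : KClause n k // kSat σ C} = n.choose k * (2 ^ k - 1) := by
  have e : {C : KClause n k // kSat σ C} ≃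
      Σ A : {A : Finset (Fin n) // A.card = k},
        {f : {x // x ∈ A.1} → Bool // ∃ i : {x // x ∈ A.1}, σ i.1 = f i} :=
    { toFun := fun C => ⟨C.1.1, C.1.2, C.2⟩
      invFun := fun x => ⟨⟨x.1, x.2.1⟩, x.2.2⟩
      left_inv := fun _ => rfl
      right_inv := fun _ => rfl }
  rw [Fintype.card_congr e]
  rw [Fintype.card_sigma]
  have : ∀ A : {A : Finset (Fin n) // A.card = k},
      Fintype.card {f : {x // x ∈ A.1} → Bool // ∃ i : {x // x ∈ A.1}, σ i.1 = f i}
        = 2 ^ k - 1 := by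
    intro A
    rw [card_exists_eq (fun i : {x // x ∈ A.1} => σ i.1)]
    simp [Fintype.card_coe, A.2]
  simp only [this, Finset.sum_const, smul_eq_mul, card_univ, Fintype.card_finset_len,
    Fintype.card_fin]

lemma card_xorSat (n : ℕ) (σ : Fin n → Bool) :
    Fintype.card {C : Finset (Fin n) × Bool // xorSat σ C} = 2 ^ n := by
  have e : {C : Finset (Fin n) × Bool // xorSat σ C} ≃ Finset (Fin n) :=
    { toFun := fun C => C.1.1
      invFun := fun A => ⟨(A, decide ((A.filter fun i => σ i).card % 2 = 0)), by
        unfold xorSat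
        rcases Nat.mod_two_eq_zero_or_one (A.filter fun i => σ i).card with h | h <;>
          simp [h]⟩
      left_inv := by
        rintro ⟨⟨A, b⟩, hb⟩
        unfold xorSat at hb
        cases b <;> simp_all
      right_inv := fun A => rfl }
  rw [Fintype.card_congr e]
  simp

lemma card_filter_pi {X : Type*} [Fintype X] [DecidableEq X] (m : ℕ) (p : X → Prop)
    [DecidablePred p] :
    (Finset.univ.filter fun F : Fin m → X => ∀ j, p (F j)).card
      = (Finset.univ.filter p).card ^ m := by
  have : (Finset.univ.filter fun F : Fin m → X => ∀ j, p (F j))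
      = Fintype.piFinset (fun _ : Fin m => Finset.univ.filter p) := by
    ext F; simp [Fintype.mem_piFinset]
  rw [this, Fintype.card_piFinset]
  simp

lemma total_card (n k m₁ m₂ : ℕ) :
    Fintype.card ((Fin m₁ → KClause n k) × (Fin m₂ → Finset (Fin n) × Bool))
      = (n.choose k * 2 ^ k) ^ m₁ * (2 ^ (n + 1)) ^ m₂ := by
  rw [Fintype.card_prod, Fintype.card_fun, Fintype.card_fun, card_KClause]
  simp [Fintype.card_prod, pow_succ]

lemma sat_count_le (n k m₁ m₂ : ℕ) :
    (Finset.univ.filter fun FQ : (Fin m₁ → KClause n k) × (Fin m₂ → Finset (Fin n) × Bool) =>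
        psiSat FQ).card
      ≤ 2 ^ n * ((n.choose k * (2 ^ k - 1)) ^ m₁ * (2 ^ n) ^ m₂) := by
  classical
  have hsub : (Finset.univ.filter fun FQ :
        (Fin m₁ → KClause n k) × (Fin m₂ → Finset (Fin n) × Bool) => psiSat FQ) ⊆
      Finset.univ.biUnion (fun σ : Fin n → Bool =>
        Finset.univ.filter fun FQ :
            (Fin m₁ → KClause n k) × (Fin m₂ → Finset (Fin n) × Bool) =>
          (∀ j, kSat σ (FQ.1 j)) ∧ (∀ j, xorSat σ (FQ.2 j))) := by
    intro FQ hFQ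
    rw [Finset.mem_filter] at hFQ
    obtain ⟨-, σ, h1, h2⟩ := hFQ
    exact Finset.mem_biUnion.mpr ⟨σ, Finset.mem_univ _,
      Finset.mem_filter.mpr ⟨Finset.mem_univ _, h1, h2⟩⟩
  have hcard : ∀ σ : Fin n → Bool,
      (Finset.univ.filter fun FQ :
          (Fin m₁ → KClause n k) × (Fin m₂ → Finset (Fin n) × Bool) =>
        (∀ j, kSat σ (FQ.1 j)) ∧ (∀ j, xorSat σ (FQ.2 j))).card
      = (n.choose k * (2 ^ k - 1)) ^ m₁ * (2 ^ n) ^ m₂ := by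
    intro σ
    rw [← Finset.univ_product_univ,
      Finset.filter_product (fun F : Fin m₁ → KClause n k => ∀ j, kSat σ (F j))
        (fun Q : Fin m₂ → Finset (Fin n) × Bool => ∀ j, xorSat σ (Q j)),
      Finset.card_product,
      card_filter_pi, card_filter_pi, ← Fintype.card_subtype, ← Fintype.card_subtype,
      card_kSat, card_xorSat]
  calc (Finset.univ.filter fun FQ :
        (Fin m₁ → KClause n k) × (Fin m₂ → Finset (Fin n) × Bool) => psiSat FQ).card
      ≤ _ := Finset.card_le_card hsub
    _ ≤ ∑ σ : Fin n → Bool, (Finset.univ.filter fun FQ :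
          (Fin m₁ → KClause n k) × (Fin m₂ → Finset (Fin n) × Bool) =>
        (∀ j, kSat σ (FQ.1 j)) ∧ (∀ j, xorSat σ (FQ.2 j))).card := Finset.card_biUnion_le
    _ = 2 ^ n * ((n.choose k * (2 ^ k - 1)) ^ m₁ * (2 ^ n) ^ m₂) := by
        simp [hcard]

lemma satratio_le (n k : ℕ) (hkn : k ≤ n) (m₁ m₂ : ℕ) :
    ((Finset.univ.filter fun FQ :
        (Fin m₁ → KClause n k) × (Fin m₂ → Finset (Fin n) × Bool) => psiSat FQ).card : ℝ)
      / (Fintype.card ((Fin m₁ → KClause n k) × (Fin m₂ → Finset (Fin n) × Bool)))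
    ≤ 2 ^ n * (((2:ℝ) ^ k - 1) / 2 ^ k) ^ m₁ * (2⁻¹ : ℝ) ^ m₂ := by
  have hch : 0 < n.choose k := Nat.choose_pos hkn
  have hchR : (0:ℝ) < (n.choose k : ℝ) := by exact_mod_cast hch
  set a : ℝ := (n.choose k : ℝ) * ((2:ℝ) ^ k - 1) with ha
  set b : ℝ := (n.choose k : ℝ) * (2:ℝ) ^ k with hb
  have h2k : (1:ℝ) ≤ (2:ℝ) ^ k := one_le_pow₀ (by norm_num : (1:ℝ) ≤ 2)
  have hb0 : (0:ℝ) < b := by positivity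
  have ha0 : (0:ℝ) ≤ a := by
    apply mul_nonneg hchR.le; linarith
  have hDeq : ((Fintype.card ((Fin m₁ → KClause n k) × (Fin m₂ → Finset (Fin n) × Bool))) : ℝ)
      = b ^ m₁ * ((2:ℝ) ^ (n+1)) ^ m₂ := by
    rw [total_card]
    push_cast
    ring
  have hD0 : (0:ℝ) < ((Fintype.card ((Fin m₁ → KClause n k) ×
      (Fin m₂ → Finset (Fin n) × Bool))) : ℝ) := by
    rw [hDeq]; positivity
  have hN : ((Finset.univ.filter fun FQ :
        (Fin m₁ → KClause n k) × (Fin m₂ → Finset (Fin n) × Bool) => psiSat FQ).card : ℝ)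
      ≤ 2 ^ n * (a ^ m₁ * ((2:ℝ) ^ n) ^ m₂) := by
    have hle := sat_count_le n k m₁ m₂
    have hle' : (((Finset.univ.filter fun FQ :
        (Fin m₁ → KClause n k) × (Fin m₂ → Finset (Fin n) × Bool) => psiSat FQ).card : ℕ) : ℝ)
        ≤ ((2 ^ n * ((n.choose k * (2 ^ k - 1)) ^ m₁ * (2 ^ n) ^ m₂) : ℕ) : ℝ) := by
      exact_mod_cast hle
    refine hle'.trans (le_of_eq ?_)
    rw [Nat.cast_mul, Nat.cast_mul, Nat.cast_pow, Nat.cast_pow, Nat.cast_pow, Nat.cast_mul,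
      Nat.cast_sub Nat.one_le_two_pow]
    push_cast
    ring
  calc ((Finset.univ.filter fun FQ :
        (Fin m₁ → KClause n k) × (Fin m₂ → Finset (Fin n) × Bool) => psiSat FQ).card : ℝ)
      / (Fintype.card ((Fin m₁ → KClause n k) × (Fin m₂ → Finset (Fin n) × Bool)))
      ≤ (2 ^ n * (a ^ m₁ * ((2:ℝ) ^ n) ^ m₂))
        / (Fintype.card ((Fin m₁ → KClause n k) × (Fin m₂ → Finset (Fin n) × Bool))) :=
        (div_le_div_iff_of_pos_right hD0).mpr hN
    _ = 2 ^ n * ((a / b) ^ m₁ * (((2:ℝ) ^ n) / ((2:ℝ) ^ (n+1))) ^ m₂) := by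
        rw [hDeq, div_pow, div_pow]
        field_simp
    _ = 2 ^ n * (((2:ℝ) ^ k - 1) / 2 ^ k) ^ m₁ * (2⁻¹ : ℝ) ^ m₂ := by
        rw [ha, hb, mul_div_mul_left _ _ hchR.ne']
        have : ((2:ℝ) ^ n) / ((2:ℝ) ^ (n+1)) = 2⁻¹ := by
          rw [pow_succ]
          field_simp
        rw [this]
        ring

/-- If `s > 1 + r·log₂(1 - 2^(-k))`, then with high probability the random
`k`-CNF-XOR formula `ψ_k(n, rn, sn)` is unsatisfiable. -/
theorem whp_cnfxor_unsat (k : ℕ) (hk : 2 ≤ k) (s r : ℝ) (hs : 0 ≤ s) (hr : 0 ≤ r)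
    (h : 1 + r * Real.logb 2 ((1 : ℝ) - (2 : ℝ) ^ (-(k : ℝ))) < s) :
    Tendsto
      (fun n : ℕ =>
        ((Finset.univ.filter fun FQ :
            (Fin ⌈r * (n : ℝ)⌉₊ → KClause n k) ×
              (Fin ⌈s * (n : ℝ)⌉₊ → Finset (Fin n) × Bool) =>
            ¬ psiSat FQ).card : ℝ) /
          (Fintype.card ((Fin ⌈r * (n : ℝ)⌉₊ → KClause n k) ×
            (Fin ⌈s * (n : ℝ)⌉₊ → Finset (Fin n) × Bool))))
      atTop (nhds 1) := by

  set p : ℝ := 1 - (2 : ℝ) ^ (-(k : ℝ)) with hpdef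
  have hklt : (2:ℝ) ^ (-(k : ℝ)) < 1 :=
    Real.rpow_lt_one_of_one_lt_of_neg (by norm_num) (by
      have : (0:ℝ) < (k:ℝ) := by exact_mod_cast Nat.lt_of_lt_of_le two_pos hk
      linarith)
  have hkpos : (0:ℝ) < (2:ℝ) ^ (-(k : ℝ)) := Real.rpow_pos_of_pos (by norm_num) _
  have hp0 : 0 < p := by rw [hpdef]; linarith
  have hp1 : p ≤ 1 := by rw [hpdef]; linarith
  set c : ℝ := 2 * p ^ r * (2:ℝ) ^ (-s) with hcdef
  have hc0 : 0 ≤ c := by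
    refine mul_nonneg (mul_nonneg (by norm_num) (Real.rpow_nonneg hp0.le r))
      (Real.rpow_nonneg (by norm_num) _)
  have hc1 : c < 1 := by
    have hceq : c = (2:ℝ) ^ (1 + r * Real.logb 2 p - s) := by
      rw [hcdef, sub_eq_add_neg, Real.rpow_add (by norm_num : (0:ℝ) < 2),
        Real.rpow_add (by norm_num : (0:ℝ) < 2), Real.rpow_one]
      congr 1
      rw [mul_comm r, Real.rpow_mul (by norm_num : (0:ℝ) ≤ 2),
        Real.rpow_logb (by norm_num) (by norm_num) hp0]
    rw [hceq]
    exact Real.rpow_lt_one_of_one_lt_of_neg (by norm_num) (by linarith)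
  have hpeq : p = ((2:ℝ) ^ k - 1) / (2:ℝ) ^ k := by
    rw [hpdef, Real.rpow_neg (by norm_num), Real.rpow_natCast]
    have h2k : ((2:ℝ) ^ k) ≠ 0 := by positivity
    field_simp
  -- satisfiable ratio
  set f : ℕ → ℝ := fun n : ℕ =>
      ((Finset.univ.filter fun FQ :
          (Fin ⌈r * (n : ℝ)⌉₊ → KClause n k) ×
            (Fin ⌈s * (n : ℝ)⌉₊ → Finset (Fin n) × Bool) =>
          psiSat FQ).card : ℝ) /
        (Fintype.card ((Fin ⌈r * (n : ℝ)⌉₊ → KClause n k) ×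
          (Fin ⌈s * (n : ℝ)⌉₊ → Finset (Fin n) × Bool))) with hfdef
  have hbound : ∀ n : ℕ, k ≤ n → f n ≤ c ^ n := by
    intro n hkn
    refine (satratio_le n k hkn ⌈r * (n : ℝ)⌉₊ ⌈s * (n : ℝ)⌉₊).trans ?_
    rw [← hpeq]
    have e1 : p ^ (⌈r * (n : ℝ)⌉₊ : ℕ) = p ^ ((⌈r * (n : ℝ)⌉₊ : ℝ)) :=
      (Real.rpow_natCast p _).symm
    have e2 : (2⁻¹:ℝ) ^ (⌈s * (n : ℝ)⌉₊ : ℕ) = (2:ℝ) ^ (-(⌈s * (n : ℝ)⌉₊ : ℝ)) := by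
      rw [Real.rpow_neg (by norm_num), Real.rpow_natCast, inv_pow]
    have hcn : c ^ n = 2 ^ n * p ^ (r * (n:ℝ)) * (2:ℝ) ^ (-(s * (n:ℝ))) := by
      rw [hcdef, mul_pow, mul_pow]
      congr 1
      · congr 1
        rw [← Real.rpow_natCast (p ^ r) n, ← Real.rpow_mul hp0.le]
      · rw [← Real.rpow_natCast ((2:ℝ) ^ (-s)) n, ← Real.rpow_mul (by norm_num : (0:ℝ) ≤ 2),
          neg_mul]
    rw [e1, e2, hcn]
    have b1 : p ^ ((⌈r * (n : ℝ)⌉₊ : ℝ)) ≤ p ^ (r * (n:ℝ)) :=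
      Real.rpow_le_rpow_of_exponent_ge hp0 hp1 (Nat.le_ceil _)
    have b2 : (2:ℝ) ^ (-(⌈s * (n : ℝ)⌉₊ : ℝ)) ≤ (2:ℝ) ^ (-(s * (n:ℝ))) :=
      Real.rpow_le_rpow_of_exponent_le (by norm_num) (neg_le_neg (Nat.le_ceil _))
    refine mul_le_mul (mul_le_mul le_rfl b1 (Real.rpow_nonneg hp0.le _) (by positivity)) b2
      (Real.rpow_nonneg (by norm_num) _) ?_
    exact mul_nonneg (by positivity) (Real.rpow_nonneg hp0.le _)
  have hnonneg : ∀ n : ℕ, 0 ≤ f n := by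
    intro n
    rw [hfdef]
    positivity
  have hf0 : Tendsto f atTop (nhds 0) :=
    squeeze_zero' (Eventually.of_forall hnonneg) ((eventually_ge_atTop k).mono hbound)
      (tendsto_pow_atTop_nhds_zero_of_lt_one hc0 hc1)
  have heq : ∀ n : ℕ, k ≤ n →
      1 - f n = ((Finset.univ.filter fun FQ :
          (Fin ⌈r * (n : ℝ)⌉₊ → KClause n k) ×
            (Fin ⌈s * (n : ℝ)⌉₊ → Finset (Fin n) × Bool) =>
          ¬ psiSat FQ).card : ℝ) /
        (Fintype.card ((Fin ⌈r * (n : ℝ)⌉₊ → KClause n k) ×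
          (Fin ⌈s * (n : ℝ)⌉₊ → Finset (Fin n) × Bool))) := by
    intro n hkn
    have hch : 0 < n.choose k := Nat.choose_pos hkn
    have hD0 : (0:ℝ) < (Fintype.card ((Fin ⌈r * (n : ℝ)⌉₊ → KClause n k) ×
        (Fin ⌈s * (n : ℝ)⌉₊ → Finset (Fin n) × Bool)) : ℝ) := by
      rw [total_card]
      have : (0:ℝ) < (n.choose k : ℝ) := by exact_mod_cast hch
      positivity
    have hsplit := Finset.card_filter_add_card_filter_not
      (s := (Finset.univ : Finset ((Fin ⌈r * (n : ℝ)⌉₊ → KClause n k) ×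
        (Fin ⌈s * (n : ℝ)⌉₊ → Finset (Fin n) × Bool)))) (p := psiSat)
    rw [Finset.card_univ] at hsplit
    have hcast : ((Finset.univ.filter fun FQ :
          (Fin ⌈r * (n : ℝ)⌉₊ → KClause n k) ×
            (Fin ⌈s * (n : ℝ)⌉₊ → Finset (Fin n) × Bool) =>
          ¬ psiSat FQ).card : ℝ)
        = (Fintype.card ((Fin ⌈r * (n : ℝ)⌉₊ → KClause n k) ×
            (Fin ⌈s * (n : ℝ)⌉₊ → Finset (Fin n) × Bool)) : ℝ)
          - ((Finset.univ.filter fun FQ :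
            (Fin ⌈r * (n : ℝ)⌉₊ → KClause n k) ×
              (Fin ⌈s * (n : ℝ)⌉₊ → Finset (Fin n) × Bool) =>
            psiSat FQ).card : ℝ) := by
      have := congrArg (Nat.cast : ℕ → ℝ) hsplit
      push_cast at this ⊢
      linarith
    rw [hcast, sub_div, div_self hD0.ne', hfdef]
  have h1 : Tendsto (fun n : ℕ => 1 - f n) atTop (nhds 1) := by
    have : Tendsto (fun _ : ℕ => (1:ℝ)) atTop (nhds 1) := tendsto_const_nhds
    simpa using this.sub hf0
  exact h1.congr' ((eventually_ge_atTop k).mono heq)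
end
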